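/- arXiv:2112.07549 — 6 statements merged into one kernel-verified Lean document; each statement's English description precedes it below -/
import Mathlib

section
/- Let N0(α) = inf{ n ≥ 1 : −L(X_1^n) − log μ0(X_1^n) − nλ ≥ −log α } for α ∈ (0,1) and λ > 0. Then the probability of error of the test satisfies μ0(N0(α) < ∞) ≤ α / (2^λ − 1). -/
open MeasureTheory Filter
open scoped ENNReal NNReal Topology BigOperators Classical

namespace ChangeDetect

variable {𝒳 : Type} [Fintype 𝒳] [Nonempty 𝒳] [MeasurableSpace 𝒳]

/-- A probability mass function on `𝒳`. -/
def IsPMF (p : 𝒳 → ℝ) : Prop := (∀ a, 0 ≤ p a) ∧ ∑ a, p a = 1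

/-- A probability mass function on `𝒳` with full support. -/
def IsPosPMF (p : 𝒳 → ℝ) : Prop := (∀ a, 0 < p a) ∧ ∑ a, p a = 1

/-- `L` is a family of length functions of fixed-to-variable prefix codes,
i.e. it satisfies Kraft's inequality for each block length `n`. -/
def Kraft (L : (n : ℕ) → (Fin n → 𝒳) → ℕ) : Prop :=
  ∀ n : ℕ, ∑ w : Fin n → 𝒳, (2 : ℝ) ^ (-(L n w : ℝ)) ≤ 1

/-- i.i.d. (memoryless) probability of a word. -/
noncomputable def wp (p : 𝒳 → ℝ) {n : ℕ} (w : Fin n → 𝒳) : ℝ := ∏ i, p (w i)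

/-- Strong universality of the code `L`:
`R_L^n = sup_μ max_w (L(w) + log₂ μ(w)) = o(n)`, the sup over memoryless sources. -/
def StronglyUniversal (L : (n : ℕ) → (Fin n → 𝒳) → ℕ) : Prop :=
  ∃ R : ℕ → ℝ, Tendsto (fun n => R n / n) atTop (𝓝 0) ∧
    ∀ (n : ℕ) (μ : 𝒳 → ℝ), IsPosPMF μ → ∀ w : Fin n → 𝒳,
      (L n w : ℝ) + Real.logb 2 (wp μ w) ≤ R n

/-- Kullback–Leibler divergence in bits between two pmfs on `𝒳`. -/
noncomputable def D (p q : 𝒳 → ℝ) : ℝ := ∑ a, p a * Real.logb 2 (p a / q a)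

/-- The word `x_{s+1}, …, x_{s+n}` of the sequence `x`. -/
def seg (x : ℕ → 𝒳) (s n : ℕ) : Fin n → 𝒳 := fun i => x (s + (i : ℕ))

/-- `P` is the joint law of a sequence of independent observations with `X_{i+1} ∼ ps i`
(characterized by its values on cylinder sets). -/
def IsProductLaw (ps : ℕ → 𝒳 → ℝ) (P : Measure (ℕ → 𝒳)) : Prop :=
  IsProbabilityMeasure P ∧
    ∀ (n : ℕ) (w : Fin n → 𝒳),
      P {x | ∀ i : Fin n, x (i : ℕ) = w i} = ∏ i : Fin n, ENNReal.ofReal (ps (i : ℕ) (w i))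

/-- `P` is the law of an i.i.d. sequence with marginal pmf `p`. -/
def IsIIDLaw (p : 𝒳 → ℝ) (P : Measure (ℕ → 𝒳)) : Prop := IsProductLaw (fun _ => p) P

/-- The one-sided test statistic `−L(x_{s+1}^{s+n}) − log₂ ν(x_{s+1}^{s+n}) − nλ`. -/
noncomputable def stat (L : (n : ℕ) → (Fin n → 𝒳) → ℕ) (ν : 𝒳 → ℝ) (lam : ℝ)
    (s : ℕ) (x : ℕ → 𝒳) (n : ℕ) : ℝ :=
  -(L n (seg x s n) : ℝ) - Real.logb 2 (wp ν (seg x s n)) - n * lam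

/-- The auxiliary stopping time
`N(α) = inf {n ≥ 1 : −L(x_{s+1}^{s+n}) − log₂ ν(x_{s+1}^{s+n}) − nλ ≥ −log₂ α}`
(`⊤` if the set is empty). -/
noncomputable def Naux (L : (n : ℕ) → (Fin n → 𝒳) → ℕ) (ν : 𝒳 → ℝ) (lam α : ℝ)
    (s : ℕ) (x : ℕ → 𝒳) : ℕ∞ :=
  sInf {m : ℕ∞ | ∃ n : ℕ, m = n ∧ 1 ≤ n ∧ -Real.logb 2 α ≤ stat L ν lam s x n}

/-- The CUSUM statistic `−L(x_{s+k+1}^{s+n}) − log₂ ν(x_{s+k+1}^{s+n}) − nλ`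
(here `0 ≤ k < n`, corresponding to the 1-indexed segment `x_{k+1}^{n}` after `s`
training samples). -/
noncomputable def cstat (L : (n : ℕ) → (Fin n → 𝒳) → ℕ) (ν : 𝒳 → ℝ) (lam : ℝ)
    (s : ℕ) (x : ℕ → 𝒳) (k n : ℕ) : ℝ :=
  -(L (n - k) (seg x (s + k) (n - k)) : ℝ)
    - Real.logb 2 (wp ν (seg x (s + k) (n - k))) - n * lam

/-- The CUSUM stopping time
`M(γ) = inf {n ≥ 1 : max_{1 ≤ k ≤ n} (−L(x_k^n) − log₂ ν(x_k^n) − nλ) ≥ log₂ γ}`. -/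
noncomputable def Mstop (L : (n : ℕ) → (Fin n → 𝒳) → ℕ) (ν : 𝒳 → ℝ) (lam γ : ℝ)
    (s : ℕ) (x : ℕ → 𝒳) : ℕ∞ :=
  sInf {m : ℕ∞ | ∃ n : ℕ, m = n ∧ 1 ≤ n ∧ ∃ k < n, Real.logb 2 γ ≤ cstat L ν lam s x k n}

/-- Expectation of an (extended) stopping time. -/
noncomputable def lexp (P : Measure (ℕ → 𝒳)) (N : (ℕ → 𝒳) → ℕ∞) : ℝ≥0∞ :=
  ∫⁻ x, (N x : ℝ≥0∞) ∂P

/-- The σ-algebra generated by the first `m` coordinates. -/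
def firstCoords (𝒳 : Type) [MeasurableSpace 𝒳] (m : ℕ) : MeasurableSpace (ℕ → 𝒳) :=
  MeasurableSpace.comap (fun x => (fun i : Fin m => x (i : ℕ))) inferInstance

/-- An (extended) stopping variable of the observation sequence. -/
def IsSeqStoppingTime (N : (ℕ → 𝒳) → ℕ∞) : Prop :=
  ∀ n : ℕ, MeasurableSet[firstCoords 𝒳 n] {x | N x ≤ (n : ℕ∞)}

/-- Lorden's worst-case expected delay
`Ē₁(N) = sup_{m ≥ 1} ess sup E_m[(N − m + 1)⁺ | X_1, …, X_{m−1}]`,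
where under `P_m` the first `m − 1` observations are i.i.d. with the pre-change law
(the full i.i.d. pre-change law is `P0`) and the observations from time `m` on are
i.i.d. with the post-change law (full i.i.d. law `P1`).  The conditional expectation
given `X_1, …, X_{m−1}` is realized by integrating out the coordinates from `m` on. -/
noncomputable def lordenE1 (P0 P1 : Measure (ℕ → 𝒳)) (N : (ℕ → 𝒳) → ℕ∞) : ℝ≥0∞ :=
  ⨆ m : ℕ, essSup
    (fun x => ∫⁻ y, ((N (fun i => if i < m then x i else y i) : ℝ≥0∞) - m) ∂P1) P0

/-- Empirical distribution of the first `n0` samples of the sequence `x`. -/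
noncomputable def emp (n0 : ℕ) (x : ℕ → 𝒳) (a : 𝒳) : ℝ :=
  ((Finset.range n0).filter (fun i => x i = a)).card / n0

/-- The optimal worst-case delay over all stopping times with `E₀(S) ≥ γ`
(Lorden's class `S_γ`). -/
noncomputable def minDelay (P0 P1 : Measure (ℕ → 𝒳)) (γ : ℝ) : ℝ≥0∞ :=
  sInf {r : ℝ≥0∞ | ∃ N : (ℕ → 𝒳) → ℕ∞, IsSeqStoppingTime N ∧
    ENNReal.ofReal γ ≤ lexp P0 N ∧ r = lordenE1 P0 P1 N}


/-- the probability of error of the auxiliary test of the JB–Page CUSUM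
procedure: `μ0(N0(α) < ∞) ≤ α / (2^λ − 1)`. -/
theorem stmt0 {𝒳 : Type} [Fintype 𝒳] [Nonempty 𝒳] [MeasurableSpace 𝒳]
    (μ0 : 𝒳 → ℝ) (hμ0 : IsPosPMF μ0)
    (L : (n : ℕ) → (Fin n → 𝒳) → ℕ) (hL : Kraft L)
    (α lam : ℝ) (hα : α ∈ Set.Ioo (0 : ℝ) 1) (hlam : 0 < lam)
    (P : Measure (ℕ → 𝒳)) (hP : IsIIDLaw μ0 P) :
    P {x | Naux L μ0 lam α 0 x < ⊤} ≤ ENNReal.ofReal (α / ((2 : ℝ) ^ lam - 1)) := by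
  obtain ⟨hα0, hα1⟩ := hα
  obtain ⟨hPprob, hPcyl⟩ := hP
  have hμpos := hμ0.1
  set r : ℝ := (2:ℝ) ^ (-lam) with hr
  have hr0 : 0 < r := Real.rpow_pos_of_pos two_pos _
  have hr1 : r < 1 := Real.rpow_lt_one_of_one_lt_of_neg one_lt_two (neg_lt_zero.2 hlam)
  set A : ℕ → Set (ℕ → 𝒳) :=
    fun n => {x | 1 ≤ n ∧ -Real.logb 2 α ≤ stat L μ0 lam 0 x n} with hA
  -- Step 1: inclusion into a countable union
  have hsub : {x | Naux L μ0 lam α 0 x < ⊤} ⊆ ⋃ n, A (n + 1) := by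
    intro x hx
    by_contra hmem
    have hempty : {m : ℕ∞ | ∃ n : ℕ, m = n ∧ 1 ≤ n ∧
        -Real.logb 2 α ≤ stat L μ0 lam 0 x n} = ∅ := by
      ext m
      simp only [Set.mem_setOf_eq, Set.mem_empty_iff_false, iff_false, not_exists]
      rintro n ⟨rfl, h1, h2⟩
      obtain ⟨k, rfl⟩ := Nat.exists_eq_succ_of_ne_zero (by omega : n ≠ 0)
      exact hmem (Set.mem_iUnion.2 ⟨k, ⟨h1, h2⟩⟩)
    simp only [Set.mem_setOf_eq, Naux, hempty, sInf_empty] at hx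
    exact lt_irrefl _ hx
  -- Step 2: bound on each A n
  have hAn : ∀ n : ℕ, P (A n) ≤ ENNReal.ofReal α * (ENNReal.ofReal r) ^ n := by
    intro n
    classical
    set S : Finset (Fin n → 𝒳) := Finset.univ.filter
      (fun w => -Real.logb 2 α ≤ -(L n w : ℝ) - Real.logb 2 (wp μ0 w) - n * lam) with hS
    have hcov : A n ⊆ ⋃ w ∈ S, {x : ℕ → 𝒳 | ∀ i : Fin n, x (i:ℕ) = w i} := by
      intro x hx
      obtain ⟨-, hx2⟩ := hx
      simp only [stat] at hx2
      exact Set.mem_biUnion (Finset.mem_filter.2 ⟨Finset.mem_univ (seg x 0 n), hx2⟩)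
        (fun i => by simp [seg])
    have hrn : r ^ n = (2:ℝ) ^ (-((n:ℝ) * lam)) := by
      rw [hr, ← Real.rpow_natCast ((2:ℝ) ^ (-lam)) n, ← Real.rpow_mul (by norm_num)]
      ring_nf
    calc P (A n) ≤ ∑ w ∈ S, P {x : ℕ → 𝒳 | ∀ i : Fin n, x (i:ℕ) = w i} :=
          (measure_mono hcov).trans (measure_biUnion_finset_le _ _)
      _ = ∑ w ∈ S, ENNReal.ofReal (wp μ0 w) := by
          refine Finset.sum_congr rfl fun w _ => ?_
          rw [hPcyl n w, wp, ← ENNReal.ofReal_prod_of_nonneg (fun i _ => (hμpos _).le)]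
      _ ≤ ∑ w ∈ S, ENNReal.ofReal (α * r ^ n * (2:ℝ) ^ (-(L n w : ℝ))) := by
          refine Finset.sum_le_sum fun w hw => ENNReal.ofReal_le_ofReal ?_
          have hcond := (Finset.mem_filter.1 hw).2
          have hp : 0 < wp μ0 w := Finset.prod_pos fun i _ => hμpos _
          have hle : Real.logb 2 (wp μ0 w) ≤
              Real.logb 2 α + (-(L n w : ℝ)) + (-((n:ℝ) * lam)) := by linarith
          calc wp μ0 w = (2:ℝ) ^ Real.logb 2 (wp μ0 w) :=
                (Real.rpow_logb two_pos (by norm_num) hp).symm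
            _ ≤ (2:ℝ) ^ (Real.logb 2 α + (-(L n w : ℝ)) + (-((n:ℝ) * lam))) :=
                Real.rpow_le_rpow_of_exponent_le one_le_two hle
            _ = α * r ^ n * (2:ℝ) ^ (-(L n w : ℝ)) := by
                rw [Real.rpow_add two_pos, Real.rpow_add two_pos,
                  Real.rpow_logb two_pos (by norm_num) hα0, hrn]
                ring
      _ = ENNReal.ofReal (∑ w ∈ S, α * r ^ n * (2:ℝ) ^ (-(L n w : ℝ))) := by
          rw [ENNReal.ofReal_sum_of_nonneg (fun w _ => by positivity)]
      _ ≤ ENNReal.ofReal (α * r ^ n) := by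
          refine ENNReal.ofReal_le_ofReal ?_
          have h1 : ∑ w ∈ S, α * r ^ n * (2:ℝ) ^ (-(L n w : ℝ)) ≤
              ∑ w : Fin n → 𝒳, α * r ^ n * (2:ℝ) ^ (-(L n w : ℝ)) :=
            Finset.sum_le_sum_of_subset_of_nonneg (Finset.subset_univ S)
              (fun w _ _ => by positivity)
          have h2 : ∑ w : Fin n → 𝒳, α * r ^ n * (2:ℝ) ^ (-(L n w : ℝ)) =
              α * r ^ n * ∑ w : Fin n → 𝒳, (2:ℝ) ^ (-(L n w : ℝ)) := by
            rw [Finset.mul_sum]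
          have h3 : α * r ^ n * ∑ w : Fin n → 𝒳, (2:ℝ) ^ (-(L n w : ℝ)) ≤
              α * r ^ n * 1 :=
            mul_le_mul_of_nonneg_left (hL n) (by positivity)
          calc ∑ w ∈ S, α * r ^ n * (2:ℝ) ^ (-(L n w : ℝ)) ≤ _ := h1
            _ = _ := h2
            _ ≤ α * r ^ n * 1 := h3
            _ = α * r ^ n := mul_one _
      _ = ENNReal.ofReal α * (ENNReal.ofReal r) ^ n := by
          rw [ENNReal.ofReal_mul hα0.le, ENNReal.ofReal_pow hr0.le]
  -- Step 3: sum the geometric series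
  have hgeom : ∑' n : ℕ, ENNReal.ofReal α * (ENNReal.ofReal r) ^ (n + 1) =
      ENNReal.ofReal α * ENNReal.ofReal r * (1 - ENNReal.ofReal r)⁻¹ := by
    have : ∀ n : ℕ, ENNReal.ofReal α * (ENNReal.ofReal r) ^ (n + 1) =
        ENNReal.ofReal α * ENNReal.ofReal r * (ENNReal.ofReal r) ^ n := by
      intro n; rw [pow_succ]; ring
    simp_rw [this]
    rw [ENNReal.tsum_mul_left, ENNReal.tsum_geometric]
  have hfinal : ENNReal.ofReal α * ENNReal.ofReal r * (1 - ENNReal.ofReal r)⁻¹ =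
      ENNReal.ofReal (α / ((2:ℝ) ^ lam - 1)) := by
    have h1r : (0:ℝ) < 1 - r := by linarith
    have hsub1 : (1 : ℝ≥0∞) - ENNReal.ofReal r = ENNReal.ofReal (1 - r) := by
      rw [ENNReal.ofReal_sub 1 hr0.le, ENNReal.ofReal_one]
    rw [hsub1, ← ENNReal.ofReal_inv_of_pos h1r, ← ENNReal.ofReal_mul hα0.le,
      ← ENNReal.ofReal_mul (by positivity)]
    congr 1
    have ht1 : (1:ℝ) < (2:ℝ) ^ lam :=
      Real.one_lt_rpow_iff_of_pos two_pos |>.2 (Or.inl ⟨one_lt_two, hlam⟩)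
    have hrt : r = ((2:ℝ) ^ lam)⁻¹ := by
      rw [hr, Real.rpow_neg (by norm_num)]
    have ht0 : (2:ℝ) ^ lam ≠ 0 := by positivity
    have ht1' : (2:ℝ) ^ lam - 1 ≠ 0 := by linarith
    rw [hrt]
    field_simp
  calc P {x | Naux L μ0 lam α 0 x < ⊤} ≤ P (⋃ n, A (n + 1)) := measure_mono hsub
    _ ≤ ∑' n : ℕ, P (A (n + 1)) := measure_iUnion_le _
    _ ≤ ∑' n : ℕ, ENNReal.ofReal α * (ENNReal.ofReal r) ^ (n + 1) :=
        ENNReal.tsum_le_tsum fun n => hAn (n + 1)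
    _ = ENNReal.ofReal α * ENNReal.ofReal r * (1 - ENNReal.ofReal r)⁻¹ := hgeom
    _ = ENNReal.ofReal (α / ((2:ℝ) ^ lam - 1)) := hfinal

end ChangeDetect
end

section
/- Let M0(γ) = inf{ n ≥ 1 : max_{1 ≤ k ≤ n} ( −L(X_k^n) − log μ0(X_k^n) − nλ ) ≥ log γ } for γ > 1 and λ > 0. Then E_0(M0(γ)) ≥ γ (2^λ − 1), where E_0 denotes expectation when all observations X_1, X_2, … are i.i.d. with distribution μ0. -/
open MeasureTheory Filter
open scoped ENNReal NNReal Topology BigOperators Classical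

/-!
Under the i.i.d. law, Kraft's inequality bounds the probability that the statistic of one segment
ending at time `n` reaches `log₂ γ` by `γ⁻¹ 2^(-nλ)`; a union bound over the `n` starting points
gives `P(M = n) ≤ n γ⁻¹ 2^(-nλ)`. Hence `E[1/M] ≤ ∑_{n ≥ 1} γ⁻¹ 2^(-nλ) = 1 / (γ (2^λ - 1))`, and
Jensen's inequality `E[M] ≥ 1 / E[1/M]` concludes. The σ-algebra on `𝒳` is arbitrary, so `M` need
not be measurable; Jensen is applied to a measurable minorant of `M` with smaller level sets.
-/

theorem ENNReal.two_mul_le_add_mul_inv {a c : ℝ≥0∞} (hc : c ≠ ⊤) : 2 * c ≤ a + c * c * a⁻¹ := by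
  rcases eq_or_ne a 0 with rfl | ha0
  · rcases eq_or_ne c 0 with rfl | hc0
    · simp
    · simp [ENNReal.mul_top (mul_ne_zero hc0 hc0)]
  rcases eq_or_ne a ⊤ with rfl | hat
  · simp
  lift a to ℝ≥0 using hat
  lift c to ℝ≥0 using hc
  have ha : (a : ℝ) ≠ 0 := by exact_mod_cast ha0
  rw [← ENNReal.coe_inv (by exact_mod_cast ha0)]
  norm_cast
  rw [← NNReal.coe_le_coe]
  push_cast
  rw [← sub_nonneg]
  have key : (a : ℝ) + c * c * (a : ℝ)⁻¹ - 2 * c = ((a : ℝ) - c) ^ 2 / a := by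
    field_simp
    ring
  rw [key]
  positivity

theorem ENat.eq_natCast_add_one_iff {m : ℕ∞} {k : ℕ} :
    m = (k + 1 : ℕ) ↔ m ≤ (k + 1 : ℕ) ∧ ¬ m ≤ k := by
  induction m using ENat.recTopCoe with
  | top => simp only [ENat.top_ne_natCast, ENat.natCast_ne_top, top_le_iff, false_and]
  | coe m =>
    simp only [Nat.cast_inj, Nat.cast_le]
    omega

namespace MeasureTheory

variable {Ω : Type*} [MeasurableSpace Ω] {P : Measure Ω}

/-- The minorant is the hitting time of monotone measurable hulls of the sets `{M ≤ n}`. -/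
theorem exists_measurable_le_measure_preimage_natCast_le [IsFiniteMeasure P] (M : Ω → ℕ∞) :
    ∃ N : Ω → ℕ∞, Measurable N ∧ (∀ x, N x ≤ M x) ∧
      ∀ n : ℕ, P (N ⁻¹' {(n : ℕ∞)}) ≤ P (M ⁻¹' {(n : ℕ∞)}) := by
  set A : ℕ → Set Ω := fun n => {x | M x ≤ n}
  set D : ℕ → Set Ω := fun n => ⋂ j ≥ n, toMeasurable P (A j)
  have hD_meas : ∀ n, MeasurableSet (D n) := fun n =>
    .biInter (Set.to_countable _) fun j _ => measurableSet_toMeasurable _ _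
  have hD_mono : Monotone D := fun a b hab =>
    Set.biInter_subset_biInter_left fun j hj => le_trans hab hj
  have hAD : ∀ n, A n ⊆ D n := fun n x hx =>
    Set.mem_iInter₂.2 fun j hj => subset_toMeasurable _ _
      (show M x ≤ j from le_trans hx (by exact_mod_cast hj))
  have hPD : ∀ n, P (D n) = P (A n) := fun n =>
    le_antisymm ((measure_mono (Set.biInter_subset_of_mem le_rfl)).trans_eq
      (measure_toMeasurable _)) (measure_mono (hAD n))
  let N : Ω → ℕ∞ := fun x => if h : ∃ n, x ∈ D n then Nat.find h else ⊤
  have hN_le : ∀ x (n : ℕ), N x ≤ n ↔ x ∈ D n := by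
    intro x n
    by_cases h : ∃ n, x ∈ D n
    · simp only [N, dif_pos h, Nat.cast_le, Nat.find_le_iff]
      exact ⟨fun ⟨m, hmn, hm⟩ => hD_mono hmn hm, fun hn => ⟨n, le_rfl, hn⟩⟩
    · simp only [N, dif_neg h, top_le_iff, ENat.natCast_ne_top, false_iff]
      exact fun hn => h ⟨n, hn⟩
  have hN_zero : N ⁻¹' {((0 : ℕ) : ℕ∞)} = D 0 := by
    ext x
    simp [← hN_le x 0]
  have hN_succ : ∀ k : ℕ, N ⁻¹' {((k + 1 : ℕ) : ℕ∞)} = D (k + 1) \ D k := by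
    intro k
    ext x
    simp only [Set.mem_preimage, Set.mem_singleton_iff, Set.mem_sdiff, ENat.eq_natCast_add_one_iff,
      hN_le]
  refine ⟨N, ENat.measurable_iff.2 fun n => ?_, fun x => ?_, fun n => ?_⟩
  · cases n with
    | zero => rw [hN_zero]; exact hD_meas 0
    | succ k => rw [hN_succ]; exact (hD_meas _).diff (hD_meas _)
  · induction hM : M x using ENat.recTopCoe with
    | top => exact le_top
    | coe m => exact (hN_le x m).2 (hAD m hM.le)
  · cases n with
    | zero =>
      rw [hN_zero, hPD]
      exact measure_mono fun x hx => nonpos_iff_eq_zero.1 hx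
    | succ k =>
      rw [hN_succ, measure_sdiff (hD_mono k.le_succ) (hD_meas k).nullMeasurableSet
        (measure_ne_top _ _), hPD, hPD]
      refine le_measure_sdiff.trans (measure_mono fun x hx => ?_)
      exact ENat.eq_natCast_add_one_iff.2 hx

theorem lintegral_inv_eq_tsum_measure_preimage_natCast {N : Ω → ℕ∞} (hN : Measurable N) :
    ∫⁻ x, (N x : ℝ≥0∞)⁻¹ ∂P = ∑' n : ℕ, (n : ℝ≥0∞)⁻¹ * P (N ⁻¹' {(n : ℕ∞)}) := by
  have h_inv : ∀ x, (N x : ℝ≥0∞)⁻¹ =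
      ∑' n : ℕ, (N ⁻¹' {(n : ℕ∞)}).indicator (fun _ => (n : ℝ≥0∞)⁻¹) x := by
    intro x
    induction hx : N x using ENat.recTopCoe with
    | top => simp [Set.indicator, hx]
    | coe m =>
      rw [tsum_eq_single m fun n hn => by simp [Set.indicator, hx, Ne.symm hn]]
      simp [hx]
  simp_rw [h_inv]
  rw [lintegral_tsum fun n => (measurable_const.indicator
    (hN (measurableSet_singleton _))).aemeasurable]
  simp_rw [lintegral_indicator_const (hN (measurableSet_singleton _))]

theorem le_lintegral_of_mul_lintegral_inv_le_one [IsProbabilityMeasure P] {f : Ω → ℝ≥0∞}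
    (hf : AEMeasurable f P) {c : ℝ≥0∞} (hc : c ≠ ⊤) (h : c * ∫⁻ x, (f x)⁻¹ ∂P ≤ 1) :
    c ≤ ∫⁻ x, f x ∂P := by
  have key : c + c ≤ ∫⁻ x, f x ∂P + c := calc
    c + c = ∫⁻ _, 2 * c ∂P := by simp [two_mul]
    _ ≤ ∫⁻ x, f x + c * c * (f x)⁻¹ ∂P :=
      lintegral_mono fun x => ENNReal.two_mul_le_add_mul_inv hc
    _ = ∫⁻ x, f x ∂P + c * (c * ∫⁻ x, (f x)⁻¹ ∂P) := by
      rw [lintegral_add_left' hf, lintegral_const_mul' _ _ (ENNReal.mul_ne_top hc hc), mul_assoc]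
    _ ≤ ∫⁻ x, f x ∂P + c := by
      gcongr
      exact (mul_le_mul_right h c).trans_eq (mul_one c)
  exact (ENNReal.add_le_add_iff_right hc).1 key

/-- Jensen's inequality `E[M] ≥ 1 / E[1/M]`. -/
theorem le_lintegral_of_mul_tsum_inv_mul_measure_le_one [IsProbabilityMeasure P] (M : Ω → ℕ∞)
    {c : ℝ≥0∞} (hc : c ≠ ⊤) (h : c * ∑' n : ℕ, (n : ℝ≥0∞)⁻¹ * P (M ⁻¹' {(n : ℕ∞)}) ≤ 1) :
    c ≤ ∫⁻ x, (M x : ℝ≥0∞) ∂P := by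
  obtain ⟨N, hN, hNM, hPN⟩ := exists_measurable_le_measure_preimage_natCast_le (P := P) M
  have hN' : Measurable fun x => (N x : ℝ≥0∞) := measurable_from_top.comp hN
  calc c ≤ ∫⁻ x, (N x : ℝ≥0∞) ∂P := by
        refine le_lintegral_of_mul_lintegral_inv_le_one hN'.aemeasurable hc ?_
        rw [lintegral_inv_eq_tsum_measure_preimage_natCast hN]
        exact (mul_le_mul_right (ENNReal.tsum_le_tsum fun n => mul_le_mul_right (hPN n) _) c).trans h
    _ ≤ ∫⁻ x, (M x : ℝ≥0∞) ∂P := lintegral_mono fun x => ENat.toENNReal_le.2 (hNM x)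

end MeasureTheory

/-- Barron's lemma: a code beats the ideal code length `-log₂ q` by `c` bits with `q`-probability
at most `2^(-c)`. -/
theorem sum_filter_le_two_rpow_neg_of_kraft {W : Type*} [Fintype W] (q ℓ : W → ℝ)
    (hℓ : ∑ w, (2 : ℝ) ^ (-ℓ w) ≤ 1) (c : ℝ) :
    ∑ w ∈ Finset.univ.filter (fun w => c ≤ -ℓ w - Real.logb 2 (q w)), q w ≤ 2 ^ (-c) := by
  have hq : ∀ w ∈ Finset.univ.filter (fun w => c ≤ -ℓ w - Real.logb 2 (q w)),
      q w ≤ 2 ^ (-c) * 2 ^ (-ℓ w) := by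
    intro w hw
    rcases le_or_gt (q w) 0 with hq0 | hq0
    · exact hq0.trans (by positivity)
    rw [← Real.rpow_add two_pos, ← Real.logb_le_iff_le_rpow one_lt_two hq0]
    linarith [(Finset.mem_filter.1 hw).2]
  calc _ ≤ ∑ w ∈ Finset.univ.filter (fun w => c ≤ -ℓ w - Real.logb 2 (q w)),
        (2 : ℝ) ^ (-c) * 2 ^ (-ℓ w) := Finset.sum_le_sum hq
    _ ≤ ∑ w, (2 : ℝ) ^ (-c) * 2 ^ (-ℓ w) :=
      Finset.sum_le_sum_of_subset_of_nonneg (Finset.filter_subset _ _) fun _ _ _ => by positivity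
    _ ≤ 2 ^ (-c) := by
      rw [← Finset.mul_sum]
      exact mul_le_of_le_one_right (by positivity) hℓ

namespace ChangeDetect

variable {𝒳 : Type} {p : 𝒳 → ℝ}

theorem wp_append {k m : ℕ} (v : Fin k → 𝒳) (w : Fin m → 𝒳) :
    wp p (Fin.append v w) = wp p v * wp p w := by
  simp [wp, Fin.prod_univ_add]

theorem exists_le_cstat_of_Mstop_eq {L : (n : ℕ) → (Fin n → 𝒳) → ℕ} {ν : 𝒳 → ℝ} {lam γ : ℝ}
    {s : ℕ} {x : ℕ → 𝒳} {n : ℕ} (h : Mstop L ν lam γ s x = n) :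
    ∃ k < n, Real.logb 2 γ ≤ cstat L ν lam s x k n := by
  have h_ne : {m : ℕ∞ | ∃ n : ℕ, m = n ∧ 1 ≤ n ∧
      ∃ k < n, Real.logb 2 γ ≤ cstat L ν lam s x k n}.Nonempty := by
    refine Set.nonempty_iff_ne_empty.2 fun h_empty => ENat.top_ne_natCast n ?_
    rw [← h, Mstop, h_empty, sInf_empty]
  obtain ⟨m, hm, -, h_ev⟩ := csInf_mem h_ne
  rw [← Mstop, h, Nat.cast_inj] at hm
  exact hm ▸ h_ev

variable [Fintype 𝒳]

theorem IsPosPMF.isPMF (hp : IsPosPMF p) : IsPMF p := ⟨fun a => (hp.1 a).le, hp.2⟩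

theorem IsPMF.wp_nonneg (hp : IsPMF p) {n : ℕ} (w : Fin n → 𝒳) : 0 ≤ wp p w :=
  Finset.prod_nonneg fun i _ => hp.1 (w i)

theorem IsPMF.sum_wp (hp : IsPMF p) (n : ℕ) : ∑ w : Fin n → 𝒳, wp p w = 1 := by
  simp only [wp, ← Fintype.prod_sum (fun (_ : Fin n) (a : 𝒳) => p a), hp.2,
    Finset.prod_const_one]

variable [MeasurableSpace 𝒳] {P : Measure (ℕ → 𝒳)}

theorem IsIIDLaw.measure_seg_eq_le (hp : IsPMF p) (hP : IsIIDLaw p P) (s m : ℕ)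
    (w : Fin m → 𝒳) : P {x | seg x s m = w} ≤ ENNReal.ofReal (wp p w) := by
  have h_cyl : ∀ {n : ℕ} (u : Fin n → 𝒳),
      P {x | ∀ i : Fin n, x i = u i} = ENNReal.ofReal (wp p u) := fun u => by
    rw [hP.2, wp, ENNReal.ofReal_prod_of_nonneg fun i _ => hp.1 _]
  have h_sub : {x | seg x s m = w} ⊆
      ⋃ v : Fin s → 𝒳, {x | ∀ i : Fin (s + m), x i = Fin.append v w i} := by
    rintro x rfl
    refine Set.mem_iUnion.2 ⟨seg x 0 s, fun i => ?_⟩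
    refine Fin.addCases (fun i => ?_) (fun i => ?_) i <;> simp [seg]
  calc P {x | seg x s m = w}
      ≤ ∑ v : Fin s → 𝒳, P {x | ∀ i : Fin (s + m), x i = Fin.append v w i} :=
        (measure_mono h_sub).trans (measure_iUnion_fintype_le _ _)
    _ = ∑ v : Fin s → 𝒳, ENNReal.ofReal (wp p v * wp p w) := by simp_rw [h_cyl, wp_append]
    _ = ENNReal.ofReal (wp p w) := by
      rw [← ENNReal.ofReal_sum_of_nonneg fun v _ => mul_nonneg (hp.wp_nonneg v) (hp.wp_nonneg w),
        ← Finset.sum_mul, hp.sum_wp, one_mul]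

theorem IsIIDLaw.measure_le_cstat_le (hp : IsPMF p) (hP : IsIIDLaw p P)
    {L : (n : ℕ) → (Fin n → 𝒳) → ℕ} (hL : Kraft L) (γ lam : ℝ) (s k n : ℕ) :
    P {x | Real.logb 2 γ ≤ cstat L p lam s x k n} ≤
      ENNReal.ofReal (2 ^ (-(Real.logb 2 γ + n * lam))) := by
  set c := Real.logb 2 γ + n * lam
  set S := Finset.univ.filter
    (fun w : Fin (n - k) → 𝒳 => c ≤ -(L (n - k) w : ℝ) - Real.logb 2 (wp p w))
  have h_sub : {x | Real.logb 2 γ ≤ cstat L p lam s x k n} ⊆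
      ⋃ w ∈ S, {x | seg x (s + k) (n - k) = w} := by
    intro x hx
    refine Set.mem_iUnion₂.2 ⟨_, Finset.mem_filter.2 ⟨Finset.mem_univ _, ?_⟩, rfl⟩
    simp only [cstat, Set.mem_ofPred_eq] at hx
    linarith
  calc P {x | Real.logb 2 γ ≤ cstat L p lam s x k n}
      ≤ ∑ w ∈ S, P {x | seg x (s + k) (n - k) = w} :=
        (measure_mono h_sub).trans (measure_biUnion_finset_le _ _)
    _ ≤ ∑ w ∈ S, ENNReal.ofReal (wp p w) :=
        Finset.sum_le_sum fun w _ => hP.measure_seg_eq_le hp _ _ w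
    _ = ENNReal.ofReal (∑ w ∈ S, wp p w) :=
        (ENNReal.ofReal_sum_of_nonneg fun w _ => hp.wp_nonneg w).symm
    _ ≤ ENNReal.ofReal (2 ^ (-c)) :=
        ENNReal.ofReal_le_ofReal (sum_filter_le_two_rpow_neg_of_kraft _ _ (hL (n - k)) c)

theorem IsIIDLaw.measure_Mstop_eq_le (hp : IsPMF p) (hP : IsIIDLaw p P)
    {L : (n : ℕ) → (Fin n → 𝒳) → ℕ} (hL : Kraft L) {γ : ℝ} (hγ : 0 < γ) (lam : ℝ) (s n : ℕ) :
    P (Mstop L p lam γ s ⁻¹' {(n : ℕ∞)}) ≤ n * ENNReal.ofReal (γ⁻¹ * ((2 : ℝ) ^ (-lam)) ^ n) := by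
  have h_rpow : (2 : ℝ) ^ (-(Real.logb 2 γ + n * lam)) = γ⁻¹ * ((2 : ℝ) ^ (-lam)) ^ n := by
    rw [neg_add, Real.rpow_add two_pos, Real.rpow_neg zero_le_two,
      Real.rpow_logb two_pos one_lt_two.ne' hγ, ← Real.rpow_natCast, ← Real.rpow_mul zero_le_two,
      mul_comm]
    ring_nf
  have h_sub : Mstop L p lam γ s ⁻¹' {(n : ℕ∞)} ⊆
      ⋃ k ∈ Finset.range n, {x | Real.logb 2 γ ≤ cstat L p lam s x k n} := fun x hx => by
    obtain ⟨k, hk, h_ev⟩ := exists_le_cstat_of_Mstop_eq hx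
    exact Set.mem_iUnion₂.2 ⟨k, Finset.mem_range.2 hk, h_ev⟩
  calc P (Mstop L p lam γ s ⁻¹' {(n : ℕ∞)})
      ≤ ∑ k ∈ Finset.range n, P {x | Real.logb 2 γ ≤ cstat L p lam s x k n} :=
        (measure_mono h_sub).trans (measure_biUnion_finset_le _ _)
    _ ≤ ∑ _k ∈ Finset.range n, ENNReal.ofReal (γ⁻¹ * ((2 : ℝ) ^ (-lam)) ^ n) :=
        Finset.sum_le_sum fun k _ => h_rpow ▸ hP.measure_le_cstat_le hp hL γ lam s k n
    _ = n * ENNReal.ofReal (γ⁻¹ * ((2 : ℝ) ^ (-lam)) ^ n) := by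
        rw [Finset.sum_const, Finset.card_range, nsmul_eq_mul]

theorem IsIIDLaw.tsum_inv_mul_measure_Mstop_eq_le (hp : IsPMF p) (hP : IsIIDLaw p P)
    {L : (n : ℕ) → (Fin n → 𝒳) → ℕ} (hL : Kraft L) {γ : ℝ} (hγ : 0 < γ) (lam : ℝ) (s : ℕ) :
    ∑' n : ℕ, (n : ℝ≥0∞)⁻¹ * P (Mstop L p lam γ s ⁻¹' {(n : ℕ∞)}) ≤
      ∑' n : ℕ, ENNReal.ofReal (γ⁻¹ * ((2 : ℝ) ^ (-lam)) ^ (n + 1)) := by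
  have h_zero : P (Mstop L p lam γ s ⁻¹' {((0 : ℕ) : ℕ∞)}) = 0 :=
    le_antisymm ((hP.measure_Mstop_eq_le hp hL hγ lam s 0).trans_eq (by simp)) zero_le
  rw [tsum_eq_zero_add' ENNReal.summable, h_zero, mul_zero, zero_add]
  refine ENNReal.tsum_le_tsum fun n => ?_
  calc ((n + 1 : ℕ) : ℝ≥0∞)⁻¹ * P (Mstop L p lam γ s ⁻¹' {((n + 1 : ℕ) : ℕ∞)})
      ≤ ((n + 1 : ℕ) : ℝ≥0∞)⁻¹ *
          ((n + 1 : ℕ) * ENNReal.ofReal (γ⁻¹ * ((2 : ℝ) ^ (-lam)) ^ (n + 1))) :=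
        mul_le_mul_right (hP.measure_Mstop_eq_le hp hL hγ lam s (n + 1)) _
    _ = ENNReal.ofReal (γ⁻¹ * ((2 : ℝ) ^ (-lam)) ^ (n + 1)) := by
        rw [← mul_assoc, ENNReal.inv_mul_cancel (by simp) (by simp), one_mul]

theorem hasSum_inv_mul_two_rpow_neg_pow_succ {γ lam : ℝ} (hγ : 0 < γ) (hlam : 0 < lam) :
    HasSum (fun n : ℕ => γ⁻¹ * ((2 : ℝ) ^ (-lam)) ^ (n + 1)) (γ * ((2 : ℝ) ^ lam - 1))⁻¹ := by
  set t : ℝ := (2 : ℝ) ^ (-lam)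
  have ht1 : t < 1 := Real.rpow_lt_one_of_one_lt_of_neg one_lt_two (neg_lt_zero.2 hlam)
  have h_two_t : (2 : ℝ) ^ lam * t = 1 := by
    rw [← Real.rpow_add two_pos, add_neg_cancel, Real.rpow_zero]
  have h_val : γ⁻¹ * t * (1 - t)⁻¹ = (γ * ((2 : ℝ) ^ lam - 1))⁻¹ := by
    have ht0 : t ≠ 0 := by positivity
    rw [show 1 - t = ((2 : ℝ) ^ lam - 1) * t by linarith]
    field_simp
  have h_fun : (fun n : ℕ => γ⁻¹ * t ^ (n + 1)) = fun n => γ⁻¹ * t * t ^ n := by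
    ext n
    ring
  rw [h_fun, ← h_val]
  exact (hasSum_geometric_of_lt_one (by positivity) ht1).mul_left (γ⁻¹ * t)

theorem stmt1_general {𝒳 : Type} [Fintype 𝒳] [MeasurableSpace 𝒳]
    (μ0 : 𝒳 → ℝ) (hμ0 : IsPosPMF μ0)
    (L : (n : ℕ) → (Fin n → 𝒳) → ℕ) (hL : Kraft L)
    (γ lam : ℝ) (hγ : 1 < γ) (hlam : 0 < lam)
    (P : Measure (ℕ → 𝒳)) (hP : IsIIDLaw μ0 P) :
    ENNReal.ofReal (γ * ((2 : ℝ) ^ lam - 1)) ≤ lexp P (Mstop L μ0 lam γ 0) := by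
  have := hP.1
  have hγ0 : 0 < γ := one_pos.trans hγ
  have h_sum := hasSum_inv_mul_two_rpow_neg_pow_succ hγ0 hlam
  have h_pos : 0 < γ * ((2 : ℝ) ^ lam - 1) :=
    mul_pos hγ0 (sub_pos.2 (Real.one_lt_rpow one_lt_two hlam))
  refine le_lintegral_of_mul_tsum_inv_mul_measure_le_one _ ENNReal.ofReal_ne_top ?_
  calc ENNReal.ofReal (γ * ((2 : ℝ) ^ lam - 1)) *
        ∑' n : ℕ, (n : ℝ≥0∞)⁻¹ * P (Mstop L μ0 lam γ 0 ⁻¹' {(n : ℕ∞)})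
      ≤ ENNReal.ofReal (γ * ((2 : ℝ) ^ lam - 1)) *
          ∑' n : ℕ, ENNReal.ofReal (γ⁻¹ * ((2 : ℝ) ^ (-lam)) ^ (n + 1)) :=
        mul_le_mul_right
          (hP.tsum_inv_mul_measure_Mstop_eq_le hμ0.isPMF hL hγ0 lam 0) _
    _ = 1 := by
        rw [← ENNReal.ofReal_tsum_of_nonneg (fun n => by positivity) h_sum.summable,
          h_sum.tsum_eq, ← ENNReal.ofReal_mul h_pos.le, mul_inv_cancel₀ h_pos.ne',
          ENNReal.ofReal_one]

/-- mean time to false alarm of the JB–Page CUSUM test: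
`E₀(M0(γ)) ≥ γ (2^λ − 1)`. -/
theorem stmt1 {𝒳 : Type} [Fintype 𝒳] [Nonempty 𝒳] [MeasurableSpace 𝒳]
    (μ0 : 𝒳 → ℝ) (hμ0 : IsPosPMF μ0)
    (L : (n : ℕ) → (Fin n → 𝒳) → ℕ) (hL : Kraft L)
    (γ lam : ℝ) (hγ : 1 < γ) (hlam : 0 < lam)
    (P : Measure (ℕ → 𝒳)) (hP : IsIIDLaw μ0 P) :
    ENNReal.ofReal (γ * ((2 : ℝ) ^ lam - 1)) ≤ lexp P (Mstop L μ0 lam γ 0) :=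
  stmt1_general μ0 hμ0 L hL γ lam hγ hlam P hP

end ChangeDetect
end

section
/- Let ν be a probability mass function on 𝒳 satisfying |ν(a) − μ0(a)| < δ for every a ∈ 𝒳, where 0 < δ < p_min = min_{a∈𝒳} μ0(a), and set β = p_min/(p_min − δ). Fix α ∈ (0,1) and λ > log β. Then for every n ≥ 1, the μ0-probability of the set { y_1^n ∈ 𝒳^n : −L(y_1^n) − log ν(y_1^n) − nλ ≥ −log α } is at most α · 2^{−n(λ − log β)}. -/
open MeasureTheory Filter
open scoped ENNReal NNReal Topology BigOperators Classical

namespace ChangeDetect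

variable {𝒳 : Type} [Fintype 𝒳] [Nonempty 𝒳] [MeasurableSpace 𝒳]

/-- the μ0-probability that the statistic with the perturbed distribution
`ν` crosses `−log₂ α` at time `n` is at most `α · 2^{−n(λ − log₂ β)}`. -/
theorem stmt4 {𝒳 : Type} [Fintype 𝒳] [Nonempty 𝒳] [MeasurableSpace 𝒳]
    (μ0 ν : 𝒳 → ℝ) (hμ0 : IsPosPMF μ0) (hν : IsPMF ν)
    (L : (n : ℕ) → (Fin n → 𝒳) → ℕ) (hL : Kraft L)
    (pmin δ : ℝ) (hpmin : IsLeast (Set.range μ0) pmin)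
    (hδ0 : 0 < δ) (hδ : δ < pmin) (hclose : ∀ a, |ν a - μ0 a| < δ)
    (α lam : ℝ) (hα : α ∈ Set.Ioo (0 : ℝ) 1)
    (hlam : Real.logb 2 (pmin / (pmin - δ)) < lam)
    (n : ℕ) (hn : 1 ≤ n) :
    ∑ w : Fin n → 𝒳,
        (if -Real.logb 2 α ≤ -(L n w : ℝ) - Real.logb 2 (wp ν w) - n * lam
          then wp μ0 w else 0)
      ≤ α * (2 : ℝ) ^ (-(n : ℝ) * (lam - Real.logb 2 (pmin / (pmin - δ)))) := by
  have hα0 := hα.1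
  obtain ⟨a0, ha0⟩ := hpmin.1
  have hpmin0 : 0 < pmin := ha0 ▸ hμ0.1 a0
  set β := pmin / (pmin - δ) with hβdef
  have hsub : 0 < pmin - δ := by linarith
  have hβ0 : 0 < β := div_pos hpmin0 hsub
  have hνpos : ∀ a, 0 < ν a := fun a => by
    have h1 := abs_lt.mp (hclose a)
    have h2 : pmin ≤ μ0 a := hpmin.2 ⟨a, rfl⟩
    linarith [h1.1]
  have hratio : ∀ a, μ0 a ≤ β * ν a := fun a => by
    have h1 := abs_lt.mp (hclose a)
    have h2 : pmin ≤ μ0 a := hpmin.2 ⟨a, rfl⟩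
    rw [hβdef, div_mul_eq_mul_div, le_div_iff₀ hsub]
    nlinarith [h1.1]
  have hwν : ∀ w : Fin n → 𝒳, 0 < wp ν w := fun w =>
    Finset.prod_pos fun i _ => hνpos (w i)
  set c : ℝ := α * (2 : ℝ) ^ (-(n : ℝ) * lam) * β ^ n with hc
  have hc0 : 0 ≤ c := by positivity
  have key : ∀ w : Fin n → 𝒳,
      (if -Real.logb 2 α ≤ -(L n w : ℝ) - Real.logb 2 (wp ν w) - n * lam
        then wp μ0 w else 0) ≤ c * (2 : ℝ) ^ (-(L n w : ℝ)) := by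
    intro w
    split_ifs with h
    · have hb : Real.logb 2 (wp ν w) ≤ Real.logb 2 α - (L n w : ℝ) - n * lam := by
        linarith
      have h1 : wp ν w ≤ (2 : ℝ) ^ (Real.logb 2 α - (L n w : ℝ) - n * lam) := by
        calc wp ν w = (2 : ℝ) ^ Real.logb 2 (wp ν w) :=
              (Real.rpow_logb two_pos (by norm_num) (hwν w)).symm
          _ ≤ _ := Real.rpow_le_rpow_of_exponent_le one_le_two hb
      have h2 : wp μ0 w ≤ β ^ n * wp ν w := by
        calc wp μ0 w ≤ ∏ i, β * ν (w i) :=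
              Finset.prod_le_prod (fun i _ => (hμ0.1 (w i)).le)
                (fun i _ => hratio (w i))
          _ = β ^ n * wp ν w := by
              rw [Finset.prod_mul_distrib, Finset.prod_const, Finset.card_univ,
                Fintype.card_fin, wp]
      calc wp μ0 w ≤ β ^ n * ((2 : ℝ) ^ (Real.logb 2 α - (L n w : ℝ) - n * lam)) :=
            h2.trans (by
              have := pow_pos hβ0 n
              exact mul_le_mul_of_nonneg_left h1 (le_of_lt this))
        _ = c * (2 : ℝ) ^ (-(L n w : ℝ)) := by
            rw [hc, show Real.logb 2 α - (L n w : ℝ) - n * lam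
              = Real.logb 2 α + (-(n : ℝ) * lam) + (-(L n w : ℝ)) by push_cast; ring,
              Real.rpow_add two_pos, Real.rpow_add two_pos,
              Real.rpow_logb two_pos (by norm_num) hα0]
            ring
    · positivity
  have hβpow : β ^ n = (2 : ℝ) ^ ((n : ℝ) * Real.logb 2 β) := by
    rw [mul_comm, Real.rpow_mul (by norm_num),
      Real.rpow_logb two_pos (by norm_num) hβ0, Real.rpow_natCast]
  calc ∑ w : Fin n → 𝒳,
        (if -Real.logb 2 α ≤ -(L n w : ℝ) - Real.logb 2 (wp ν w) - n * lam
          then wp μ0 w else 0)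
      ≤ ∑ w : Fin n → 𝒳, c * (2 : ℝ) ^ (-(L n w : ℝ)) :=
        Finset.sum_le_sum fun w _ => key w
    _ = c * ∑ w : Fin n → 𝒳, (2 : ℝ) ^ (-(L n w : ℝ)) := by rw [Finset.mul_sum]
    _ ≤ c * 1 := mul_le_mul_of_nonneg_left (hL n) hc0
    _ = α * (2 : ℝ) ^ (-(n : ℝ) * (lam - Real.logb 2 β)) := by
        rw [hc, hβpow, mul_one, mul_assoc, ← Real.rpow_add two_pos]
        ring_nf
    _ = _ := rfl

end ChangeDetect
end

section
/- Consider X_1, X_2, … i.i.d. with distribution μ0. Let μ̂0 be the empirical distribution of the first n0 samples X_1^{n0}, and let ε0 = μ0( ∃ a ∈ 𝒳 : |μ̂0(a) − μ0(a)| ≥ δ ), where 0 < δ < p_min = min_{a∈𝒳} μ0(a) and β = p_min/(p_min − δ). For α ∈ (0,1) and λ > log β, define N(α) = inf{ n ≥ 1 : −L(X_{n0+1}^{n0+n}) − log μ̂0(X_{n0+1}^{n0+n}) − nλ ≥ −log α }. Then the probability of error satisfies μ0(N(α) < ∞) ≤ α / (2^{λ − log β} − 1) + ε0. -/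
open MeasureTheory Filter
open scoped ENNReal NNReal Topology BigOperators Classical

namespace ChangeDetect

variable {𝒳 : Type} [Fintype 𝒳] [Nonempty 𝒳] [MeasurableSpace 𝒳]

/-- Upper bound for the probability that a segment of an i.i.d. sequence equals a
given word. -/
lemma cyl_bound {𝒳 : Type} [Fintype 𝒳] [Nonempty 𝒳] [MeasurableSpace 𝒳]
    (μ0 : 𝒳 → ℝ) (h0 : ∀ a, 0 ≤ μ0 a) (h1 : ∑ a, μ0 a = 1)
    (P : Measure (ℕ → 𝒳)) (hP : IsIIDLaw μ0 P) (s m : ℕ) (w : Fin m → 𝒳) :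
    P {x | ∀ j : Fin m, x (s + (j : ℕ)) = w j} ≤ ENNReal.ofReal (wp μ0 w) := by
  classical
  set ext : (Fin s → 𝒳) → Fin (s + m) → 𝒳 := fun v i =>
    if h : (i : ℕ) < s then v ⟨(i : ℕ), h⟩ else w ⟨(i : ℕ) - s, by omega⟩ with hext
  have hsub : {x | ∀ j : Fin m, x (s + (j : ℕ)) = w j} ⊆
      ⋃ v : Fin s → 𝒳, {x : ℕ → 𝒳 | ∀ i : Fin (s + m), x (i : ℕ) = ext v i} := by
    intro x hx
    refine Set.mem_iUnion.2 ⟨fun i => x (i : ℕ), fun i => ?_⟩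
    simp only [hext]
    split_ifs with h
    · rfl
    · have h2 := hx ⟨(i : ℕ) - s, by omega⟩
      convert h2 using 2
      show (i : ℕ) = s + ((i : ℕ) - s)
      omega
  have hcyl : ∀ v : Fin s → 𝒳,
      P {x : ℕ → 𝒳 | ∀ i : Fin (s + m), x (i : ℕ) = ext v i}
        = (∏ i : Fin s, ENNReal.ofReal (μ0 (v i))) *
            ∏ j : Fin m, ENNReal.ofReal (μ0 (w j)) := by
    intro v
    rw [hP.2 (s + m) (ext v), Fin.prod_univ_add]
    congr 1
    · refine Finset.prod_congr rfl fun i _ => ?_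
      have : ext v (Fin.castAdd m i) = v i := by
        simp only [hext]
        rw [dif_pos (by simp [Fin.is_lt] : ((Fin.castAdd m i : Fin (s+m)) : ℕ) < s)]
        exact congrArg v (Fin.ext (by simp))
      rw [this]
    · refine Finset.prod_congr rfl fun j _ => ?_
      have : ext v (Fin.natAdd s j) = w j := by
        simp only [hext]
        rw [dif_neg (by simp : ¬ ((Fin.natAdd s j : Fin (s+m)) : ℕ) < s)]
        congr 1
        exact Fin.ext (by simp)
      rw [this]
  calc P {x | ∀ j : Fin m, x (s + (j : ℕ)) = w j}
      ≤ ∑' v : Fin s → 𝒳, P {x : ℕ → 𝒳 | ∀ i : Fin (s + m), x (i : ℕ) = ext v i} :=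
        le_trans (measure_mono hsub) (measure_iUnion_le _)
    _ = ∑ v : Fin s → 𝒳, P {x : ℕ → 𝒳 | ∀ i : Fin (s + m), x (i : ℕ) = ext v i} := tsum_fintype _
    _ = ∑ v : Fin s → 𝒳, (∏ i : Fin s, ENNReal.ofReal (μ0 (v i))) *
          ∏ j : Fin m, ENNReal.ofReal (μ0 (w j)) :=
        Finset.sum_congr rfl fun v _ => hcyl v
    _ = (∑ v : Fin s → 𝒳, ∏ i : Fin s, ENNReal.ofReal (μ0 (v i))) *
          ∏ j : Fin m, ENNReal.ofReal (μ0 (w j)) := by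
        rw [← Finset.sum_mul]
    _ = ((∑ a, ENNReal.ofReal (μ0 a)) ^ s) * ∏ j : Fin m, ENNReal.ofReal (μ0 (w j)) := by
        rw [Fintype.sum_pow]
    _ ≤ ENNReal.ofReal (wp μ0 w) := by
        have hone : (∑ a, ENNReal.ofReal (μ0 a)) = 1 := by
          rw [← ENNReal.ofReal_sum_of_nonneg (fun a _ => h0 a), h1, ENNReal.ofReal_one]
        rw [hone, one_pow, one_mul, wp,
          ENNReal.ofReal_prod_of_nonneg (fun j _ => h0 (w j))]

/-- probability of error of the modified test that uses the empirical
pre-change distribution from the first `n0` samples: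
`μ0(N(α) < ∞) ≤ α/(2^{λ − log₂ β} − 1) + ε0`, where
`ε0 = μ0(∃ a, |μ̂0(a) − μ0(a)| ≥ δ)`. -/
theorem stmt5 {𝒳 : Type} [Fintype 𝒳] [Nonempty 𝒳] [MeasurableSpace 𝒳]
    (μ0 : 𝒳 → ℝ) (hμ0 : IsPosPMF μ0)
    (L : (n : ℕ) → (Fin n → 𝒳) → ℕ) (hL : Kraft L)
    (pmin δ : ℝ) (hpmin : IsLeast (Set.range μ0) pmin)
    (hδ0 : 0 < δ) (hδ : δ < pmin)
    (n0 : ℕ) (hn0 : 1 ≤ n0)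
    (α lam : ℝ) (hα : α ∈ Set.Ioo (0 : ℝ) 1)
    (hlam : Real.logb 2 (pmin / (pmin - δ)) < lam)
    (P : Measure (ℕ → 𝒳)) (hP : IsIIDLaw μ0 P) :
    P {x | Naux L (emp n0 x) lam α n0 x < ⊤}
      ≤ ENNReal.ofReal (α / ((2 : ℝ) ^ (lam - Real.logb 2 (pmin / (pmin - δ))) - 1))
        + P {x | ∃ a, δ ≤ |emp n0 x a - μ0 a|} := by
  classical
  obtain ⟨hPprob, hPcyl⟩ := hP
  obtain ⟨⟨a0, ha0⟩, hpmin_le⟩ := hpmin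
  have hpminpos : 0 < pmin := ha0 ▸ hμ0.1 a0
  have hpd : 0 < pmin - δ := by linarith
  set β : ℝ := pmin / (pmin - δ) with hβdef
  have hβpos : 0 < β := div_pos hpminpos hpd
  set c : ℝ := lam - Real.logb 2 β with hcdef
  have hc : 0 < c := by rw [hcdef]; linarith
  set r : ℝ := (2 : ℝ) ^ (-c) with hrdef
  have hrpos : 0 < r := Real.rpow_pos_of_pos (by norm_num) _
  have hRgt1 : 1 < (2 : ℝ) ^ c :=
    (Real.one_lt_rpow_iff_of_pos (by norm_num)).2 (Or.inl ⟨by norm_num, hc⟩)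
  have hrinv : r = ((2 : ℝ) ^ c)⁻¹ := by
    rw [hrdef, Real.rpow_neg (by norm_num)]
  have hrlt1 : r < 1 := by
    rw [hrinv]
    exact inv_lt_one_of_one_lt₀ hRgt1
  set A : ℕ → Set (ℕ → 𝒳) :=
    fun m => {x | -Real.logb 2 α ≤ stat L (emp n0 x) lam n0 x m} with hA
  set good : Set (ℕ → 𝒳) := {x | ∀ a, |emp n0 x a - μ0 a| < δ} with hgood
  -- step 1: inclusion
  have hsub : {x | Naux L (emp n0 x) lam α n0 x < ⊤} ⊆
      (⋃ n : ℕ, (A (n + 1) ∩ good)) ∪ {x | ∃ a, δ ≤ |emp n0 x a - μ0 a|} := by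
    intro x hx
    by_cases hg : ∀ a, |emp n0 x a - μ0 a| < δ
    · left
      have hx' : Naux L (emp n0 x) lam α n0 x ≠ ⊤ := ne_of_lt hx
      rw [Naux, Ne, sInf_eq_top] at hx'
      push_neg at hx'
      obtain ⟨mv, hmem, hne⟩ := hx'
      obtain ⟨n, rfl, hn1, hstat⟩ := hmem
      have hn : n - 1 + 1 = n := by omega
      refine Set.mem_iUnion.2 ⟨n - 1, ⟨?_, hg⟩⟩
      rw [hA]
      simp only [Set.mem_setOf_eq, hn]
      exact hstat
    · right
      push_neg at hg
      obtain ⟨a, ha⟩ := hg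
      exact ⟨a, ha⟩
  -- step 2: per-block bound
  have key : ∀ m : ℕ, P (A m ∩ good) ≤ ENNReal.ofReal (α * r ^ m) := by
    intro m
    set B : Finset (Fin m → 𝒳) := Finset.univ.filter
      (fun w => wp μ0 w ≤ α * (2 : ℝ) ^ (-(L m w : ℝ)) * (2 : ℝ) ^ (-(m : ℝ) * c)) with hB
    have hpoint : ∀ x ∈ A m ∩ good, seg x n0 m ∈ B := by
      rintro x ⟨hxA, hxg⟩
      set ν : 𝒳 → ℝ := emp n0 x with hνdef
      have hν : ∀ a, 0 < ν a ∧ μ0 a ≤ β * ν a := by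
        intro a
        have h1 := hxg a
        have h2 : pmin ≤ μ0 a := hpmin_le ⟨a, rfl⟩
        have h3 : μ0 a - δ < ν a := by
          have := (abs_lt.1 h1).1
          linarith
        refine ⟨by linarith, ?_⟩
        rw [hβdef, div_mul_eq_mul_div, le_div_iff₀ hpd]
        nlinarith
      set w : Fin m → 𝒳 := seg x n0 m with hwdef
      have hwν : 0 < wp ν w := Finset.prod_pos fun i _ => (hν (w i)).1
      have hwμν : wp μ0 w ≤ β ^ m * wp ν w := by
        have hprod : β ^ m * wp ν w = ∏ i : Fin m, (β * ν (w i)) := by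
          rw [wp, Finset.prod_mul_distrib, Finset.prod_const, Finset.card_univ,
            Fintype.card_fin]
        rw [hprod, wp]
        exact Finset.prod_le_prod (fun i _ => (hμ0.1 (w i)).le) (fun i _ => (hν (w i)).2)
      have hstat : -Real.logb 2 α ≤
          -(L m w : ℝ) - Real.logb 2 (wp ν w) - (m : ℝ) * lam := hxA
      have hexp : Real.logb 2 (wp ν w) ≤
          Real.logb 2 α + (-(L m w : ℝ)) + (-(m : ℝ) * lam) := by linarith
      have hwν2 : wp ν w ≤
          (2 : ℝ) ^ (Real.logb 2 α + (-(L m w : ℝ)) + (-(m : ℝ) * lam)) := by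
        calc wp ν w = (2 : ℝ) ^ Real.logb 2 (wp ν w) :=
              (Real.rpow_logb (by norm_num) (by norm_num) hwν).symm
          _ ≤ _ := Real.rpow_le_rpow_of_exponent_le (by norm_num) hexp
      have hβm : β ^ m = (2 : ℝ) ^ ((m : ℝ) * Real.logb 2 β) := by
        have hβ2 : β = (2 : ℝ) ^ Real.logb 2 β :=
          (Real.rpow_logb (by norm_num) (by norm_num) hβpos).symm
        rw [mul_comm, Real.rpow_mul (by norm_num : (0:ℝ) ≤ 2), ← hβ2,
          Real.rpow_natCast]
      have hfinal : wp μ0 w ≤ α * (2 : ℝ) ^ (-(L m w : ℝ)) * (2 : ℝ) ^ (-(m : ℝ) * c) := by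
        calc wp μ0 w ≤ β ^ m * wp ν w := hwμν
          _ ≤ β ^ m * (2 : ℝ) ^ (Real.logb 2 α + (-(L m w : ℝ)) + (-(m : ℝ) * lam)) := by
              have hβmpos : (0:ℝ) ≤ β ^ m := (pow_pos hβpos m).le
              exact mul_le_mul_of_nonneg_left hwν2 hβmpos
          _ = (2 : ℝ) ^ ((m : ℝ) * Real.logb 2 β + (Real.logb 2 α + (-(L m w : ℝ))
                + (-(m : ℝ) * lam))) := by
              rw [hβm, ← Real.rpow_add (by norm_num : (0:ℝ) < 2)]
          _ = α * (2 : ℝ) ^ (-(L m w : ℝ)) * (2 : ℝ) ^ (-(m : ℝ) * c) := by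
              have : (m : ℝ) * Real.logb 2 β + (Real.logb 2 α + (-(L m w : ℝ))
                  + (-(m : ℝ) * lam)) = Real.logb 2 α + ((-(L m w : ℝ)) + (-(m : ℝ) * c)) := by
                rw [hcdef]; ring
              rw [this, Real.rpow_add (by norm_num : (0:ℝ) < 2),
                Real.rpow_add (by norm_num : (0:ℝ) < 2),
                Real.rpow_logb (by norm_num) (by norm_num) hα.1, mul_assoc]
      rw [hB]
      exact Finset.mem_filter.2 ⟨Finset.mem_univ _, hfinal⟩
    have hsub2 : A m ∩ good ⊆ ⋃ w ∈ B, {x | ∀ j : Fin m, x (n0 + (j : ℕ)) = w j} := by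
      intro x hx
      exact Set.mem_biUnion (hpoint x hx) (fun j => rfl)
    have hsum : ∑ w ∈ B, wp μ0 w ≤ α * r ^ m := by
      have hrm : (2 : ℝ) ^ (-(m : ℝ) * c) = r ^ m := by
        rw [hrdef, ← Real.rpow_natCast ((2:ℝ) ^ (-c)) m,
          ← Real.rpow_mul (by norm_num : (0:ℝ) ≤ 2)]
        congr 1
        ring
      calc ∑ w ∈ B, wp μ0 w
          ≤ ∑ w ∈ B, α * (2 : ℝ) ^ (-(L m w : ℝ)) * (2 : ℝ) ^ (-(m : ℝ) * c) := by
            refine Finset.sum_le_sum fun w hw => ?_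
            exact (Finset.mem_filter.1 hw).2
        _ = α * (2 : ℝ) ^ (-(m : ℝ) * c) * ∑ w ∈ B, (2 : ℝ) ^ (-(L m w : ℝ)) := by
            rw [Finset.mul_sum]
            exact Finset.sum_congr rfl fun w _ => by ring
        _ ≤ α * (2 : ℝ) ^ (-(m : ℝ) * c) * 1 := by
            have hle : ∑ w ∈ B, (2 : ℝ) ^ (-(L m w : ℝ))
                ≤ ∑ w : Fin m → 𝒳, (2 : ℝ) ^ (-(L m w : ℝ)) :=
              Finset.sum_le_sum_of_subset_of_nonneg (Finset.subset_univ _)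
                (fun w _ _ => (Real.rpow_pos_of_pos (by norm_num) _).le)
            have hnn : (0:ℝ) ≤ α * (2 : ℝ) ^ (-(m : ℝ) * c) :=
              mul_nonneg hα.1.le (Real.rpow_pos_of_pos (by norm_num) _).le
            exact mul_le_mul_of_nonneg_left (hle.trans (hL m)) hnn
        _ = α * r ^ m := by rw [mul_one, hrm]
    calc P (A m ∩ good)
        ≤ P (⋃ w ∈ B, {x | ∀ j : Fin m, x (n0 + (j : ℕ)) = w j}) := measure_mono hsub2
      _ ≤ ∑ w ∈ B, P {x | ∀ j : Fin m, x (n0 + (j : ℕ)) = w j} :=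
          measure_biUnion_finset_le _ _
      _ ≤ ∑ w ∈ B, ENNReal.ofReal (wp μ0 w) := by
          refine Finset.sum_le_sum fun w _ => ?_
          exact cyl_bound μ0 (fun a => (hμ0.1 a).le) hμ0.2 P ⟨hPprob, hPcyl⟩ n0 m w
      _ = ENNReal.ofReal (∑ w ∈ B, wp μ0 w) := by
          rw [ENNReal.ofReal_sum_of_nonneg]
          intro w _
          exact Finset.prod_nonneg fun i _ => (hμ0.1 (w i)).le
      _ ≤ ENNReal.ofReal (α * r ^ m) := ENNReal.ofReal_le_ofReal hsum
  -- step 3: geometric series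
  have hsummable : Summable (fun n : ℕ => α * r ^ (n + 1)) := by
    refine Summable.congr (((summable_geometric_of_lt_one hrpos.le hrlt1).mul_left
      (α * r))) fun n => ?_
    ring
  have htsum : ∑' n : ℕ, (α * r ^ (n + 1)) = α / ((2 : ℝ) ^ c - 1) := by
    have h1 : ∑' n : ℕ, (α * r ^ (n + 1)) = ∑' n : ℕ, ((α * r) * r ^ n) := by
      congr 1
      funext n
      ring
    rw [h1, tsum_mul_left, tsum_geometric_of_lt_one hrpos.le hrlt1, hrinv]
    have h2 : (2 : ℝ) ^ c ≠ 0 := by positivity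
    have h3 : (2 : ℝ) ^ c - 1 ≠ 0 := by nlinarith
    field_simp
  have hgeom : ∑' n : ℕ, ENNReal.ofReal (α * r ^ (n + 1))
      = ENNReal.ofReal (α / ((2 : ℝ) ^ c - 1)) := by
    rw [← ENNReal.ofReal_tsum_of_nonneg
      (fun n => mul_nonneg hα.1.le (pow_nonneg hrpos.le _)) hsummable, htsum]
  -- combine
  calc P {x | Naux L (emp n0 x) lam α n0 x < ⊤}
      ≤ P ((⋃ n : ℕ, (A (n + 1) ∩ good)) ∪ {x | ∃ a, δ ≤ |emp n0 x a - μ0 a|}) :=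
        measure_mono hsub
    _ ≤ P (⋃ n : ℕ, (A (n + 1) ∩ good)) + P {x | ∃ a, δ ≤ |emp n0 x a - μ0 a|} :=
        measure_union_le _ _
    _ ≤ (∑' n : ℕ, P (A (n + 1) ∩ good)) + P {x | ∃ a, δ ≤ |emp n0 x a - μ0 a|} := by
        gcongr
        exact measure_iUnion_le _
    _ ≤ (∑' n : ℕ, ENNReal.ofReal (α * r ^ (n + 1)))
          + P {x | ∃ a, δ ≤ |emp n0 x a - μ0 a|} := by
        gcongr with n
        exact key (n + 1)
    _ = ENNReal.ofReal (α / ((2 : ℝ) ^ c - 1)) + P {x | ∃ a, δ ≤ |emp n0 x a - μ0 a|} := by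
        rw [hgeom]

end ChangeDetect
end

section
/- Let ν be a probability mass function on 𝒳 with full support, let L be a strongly universal prefix code, and let 0 < λ < D(μ1‖ν). For α ∈ (0,1), define N(α) = inf{ n ≥ 1 : −L(X_1^n) − log ν(X_1^n) − nλ ≥ −log α }. If X_1, X_2, … are i.i.d. with distribution μ1, then the test terminates with probability one: μ1(N(α) < ∞) = 1. -/
/-!
Let `z(a) = log (μ₁(a) / ν(a))`, so that `E z(X) = D(μ₁‖ν)`, and fix `λ < λ' < D(μ₁‖ν)`.
Applying strong universality to the source `μ₁` itself gives `L(x₁ⁿ) ≤ -log μ₁(x₁ⁿ) + R_n`,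
so the statistic at time `n` is at least `∑_{i ≤ n} z(xᵢ) - R_n - nλ`. Since `R_n = o(n)`,
a sequence on which the test never stops has `∑_{i ≤ n} z(xᵢ) ≤ nλ'` for every large `n`.
By a Chernoff bound this event has probability at most `ψⁿ` for some `ψ < 1`, so it is null.
-/

open MeasureTheory Filter
open scoped ENNReal NNReal Topology BigOperators Classical

namespace ChangeDetect

open Finset

noncomputable def llr {𝒳 : Type} (μ ν : 𝒳 → ℝ) (a : 𝒳) : ℝ := Real.logb 2 (μ a / ν a)

theorem exists_pos_lt_of_hasDerivAt_neg {f : ℝ → ℝ} {f' x : ℝ} (hf : HasDerivAt f f' x)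
    (hf' : f' < 0) : ∃ t, 0 < t ∧ f (x + t) < f x := by
  obtain ⟨t, hslope, ht⟩ :=
    ((hf.tendsto_slope_zero_right.eventually (gt_mem_nhds hf')).and self_mem_nhdsWithin).exists
  exact ⟨t, ht, sub_neg.1 ((smul_neg_iff_of_pos_left (inv_pos.2 ht)).1 hslope)⟩

theorem exists_chernoff_exponent {ι : Type*} [Fintype ι] (p c : ι → ℝ) (hp : ∑ a, p a = 1)
    (hc : 0 < ∑ a, p a * c a) : ∃ t, 0 < t ∧ ∑ a, p a * Real.exp (-(t * c a)) < 1 := by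
  have hderiv : HasDerivAt (fun t => ∑ a, p a * Real.exp (-(t * c a)))
      (∑ a, p a * (Real.exp (-(0 * c a)) * -(1 * c a))) 0 :=
    HasDerivAt.fun_sum fun a _ =>
      (((hasDerivAt_id' (0 : ℝ)).mul_const (c a)).neg.exp).const_mul (p a)
  obtain ⟨t, ht, hlt⟩ := exists_pos_lt_of_hasDerivAt_neg hderiv (by simpa using hc)
  exact ⟨t, ht, by simpa [hp] using hlt⟩

theorem sum_wp_filter_le_pow {ι : Type} [Fintype ι] (p z : ι → ℝ) (hp : ∀ a, 0 ≤ p a) {t : ℝ}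
    (ht : 0 ≤ t) (b : ℝ) (n : ℕ) :
    ∑ w ∈ univ.filter (fun w : Fin n → ι => ∑ i, z (w i) ≤ n * b), wp p w
      ≤ (∑ a, p a * Real.exp (-(t * (z a - b)))) ^ n := by
  have hterm_nonneg : ∀ w : Fin n → ι, 0 ≤ ∏ i, p (w i) * Real.exp (-(t * (z (w i) - b))) :=
    fun w => prod_nonneg fun i _ => mul_nonneg (hp _) (Real.exp_nonneg _)
  -- Markov's inequality for `exp (t (n b - ∑ z))`, which is `≥ 1` on the event.
  calc ∑ w ∈ univ.filter (fun w : Fin n → ι => ∑ i, z (w i) ≤ n * b), wp p w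
      ≤ ∑ w ∈ univ.filter (fun w : Fin n → ι => ∑ i, z (w i) ≤ n * b),
          ∏ i, p (w i) * Real.exp (-(t * (z (w i) - b))) := by
        refine sum_le_sum fun w hw => ?_
        have hexponent : ∑ i, -(t * (z (w i) - b)) = t * (n * b - ∑ i, z (w i)) := by
          simp only [sum_neg_distrib, ← mul_sum, sum_sub_distrib, sum_const, card_univ,
            Fintype.card_fin, nsmul_eq_mul]
          ring
        rw [prod_mul_distrib, ← Real.exp_sum, hexponent]
        exact le_mul_of_one_le_right (prod_nonneg fun i _ => hp _) <| Real.one_le_exp <|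
          mul_nonneg ht (sub_nonneg.2 (mem_filter.1 hw).2)
    _ ≤ ∑ w : Fin n → ι, ∏ i, p (w i) * Real.exp (-(t * (z (w i) - b))) :=
        sum_le_sum_of_subset_of_nonneg (filter_subset _ _) fun w _ _ => hterm_nonneg w
    _ = (∑ a, p a * Real.exp (-(t * (z a - b)))) ^ n :=
        (Fintype.sum_pow (fun a => p a * Real.exp (-(t * (z a - b)))) n).symm

/-- Only an upper bound: cylinder sets need not be measurable for an arbitrary
`MeasurableSpace 𝒳`, so the union over `S` is controlled by subadditivity alone. -/
theorem IsIIDLaw.measure_seg_mem_le {𝒳 : Type} [MeasurableSpace 𝒳] {p : 𝒳 → ℝ}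
    {P : Measure (ℕ → 𝒳)} (hP : IsIIDLaw p P) (hp : ∀ a, 0 ≤ p a) {n : ℕ}
    (S : Finset (Fin n → 𝒳)) :
    P {x | seg x 0 n ∈ S} ≤ ENNReal.ofReal (∑ w ∈ S, wp p w) := by
  have hcylinder : ∀ w, P {x | seg x 0 n = w} = ENNReal.ofReal (wp p w) := fun w => by
    rw [wp, ENNReal.ofReal_prod_of_nonneg fun i _ => hp _, ← hP.2 n w]
    simp [seg, funext_iff]
  calc P {x | seg x 0 n ∈ S} = P (⋃ w ∈ S, {x | seg x 0 n = w}) := by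
        congr 1; ext x; simp
    _ ≤ ∑ w ∈ S, P {x | seg x 0 n = w} := measure_biUnion_finset_le _ _
    _ = ENNReal.ofReal (∑ w ∈ S, wp p w) := by
        rw [ENNReal.ofReal_sum_of_nonneg (f := wp p) fun w _ => prod_nonneg fun i _ => hp _]
        exact sum_congr rfl fun w _ => hcylinder w

theorem logb_wp_sub_logb_wp {𝒳 : Type} {μ ν : 𝒳 → ℝ} (hμ : ∀ a, 0 < μ a)
    (hν : ∀ a, 0 < ν a) {n : ℕ} (w : Fin n → 𝒳) :
    Real.logb 2 (wp μ w) - Real.logb 2 (wp ν w) = ∑ i, llr μ ν (w i) := by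
  rw [wp, wp, Real.logb_prod _ _ fun i _ => (hμ _).ne', Real.logb_prod _ _ fun i _ => (hν _).ne',
    ← sum_sub_distrib]
  exact sum_congr rfl fun i _ => (Real.logb_div (hμ _).ne' (hν _).ne').symm

theorem sum_llr_sub_le_stat {𝒳 : Type} {μ ν : 𝒳 → ℝ} (hμ : ∀ a, 0 < μ a) (hν : ∀ a, 0 < ν a)
    {L : (n : ℕ) → (Fin n → 𝒳) → ℕ} {lam r : ℝ} {s n : ℕ} {x : ℕ → 𝒳}
    (hr : (L n (seg x s n) : ℝ) + Real.logb 2 (wp μ (seg x s n)) ≤ r) :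
    ∑ i, llr μ ν (seg x s n i) - r - n * lam ≤ stat L ν lam s x n := by
  rw [← logb_wp_sub_logb_wp hμ hν, stat]
  linarith

theorem Naux_lt_top_of_le_stat {𝒳 : Type} {L : (n : ℕ) → (Fin n → 𝒳) → ℕ} {ν : 𝒳 → ℝ}
    {lam α : ℝ} {s n : ℕ} {x : ℕ → 𝒳} (hn : 1 ≤ n) (h : -Real.logb 2 α ≤ stat L ν lam s x n) :
    Naux L ν lam α s x < ⊤ :=
  (sInf_le ⟨n, rfl, hn, h⟩ : Naux L ν lam α s x ≤ n).trans_lt (ENat.natCast_lt_top n)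

theorem setOf_Naux_eq_top_subset {𝒳 : Type} [Fintype 𝒳] {μ ν : 𝒳 → ℝ} (hμ : ∀ a, 0 < μ a)
    (hν : ∀ a, 0 < ν a) {L : (n : ℕ) → (Fin n → 𝒳) → ℕ} {lam α r b : ℝ} {s n : ℕ} (hn : 1 ≤ n)
    (hr : ∀ w : Fin n → 𝒳, (L n w : ℝ) + Real.logb 2 (wp μ w) ≤ r)
    (hrb : -Real.logb 2 α + r + n * lam ≤ n * b) :
    {x | Naux L ν lam α s x = ⊤}
      ⊆ {x | seg x s n ∈ univ.filter (fun w : Fin n → 𝒳 => ∑ i, llr μ ν (w i) ≤ n * b)} := by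
  intro x hx
  by_contra hgood
  have hstat := sum_llr_sub_le_stat (lam := lam) hμ hν (hr (seg x s n))
  simp only [Set.mem_ofPred_eq, mem_filter, mem_univ, true_and, not_le] at hx hgood
  exact (Naux_lt_top_of_le_stat hn (by linarith)).ne hx

theorem eventually_add_add_mul_le_mul {R : ℕ → ℝ} (hR : Tendsto (fun n => R n / n) atTop (𝓝 0))
    (c : ℝ) {b b' : ℝ} (hb : b < b') : ∀ᶠ n : ℕ in atTop, c + R n + n * b ≤ n * b' := by
  have hlim : Tendsto (fun n : ℕ => c / n + R n / n + b) atTop (𝓝 b) := by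
    simpa using ((tendsto_const_div_atTop_nhds_zero_nat c).add hR).add_const b
  filter_upwards [hlim.eventually_lt_const hb, eventually_gt_atTop 0] with n hlt hn
  have hn' : (0 : ℝ) < n := Nat.cast_pos.2 hn
  have hmul := (mul_lt_mul_of_pos_left hlt hn').le
  rw [mul_add, mul_add, mul_div_cancel₀ _ hn'.ne', mul_div_cancel₀ _ hn'.ne'] at hmul
  linarith

theorem measure_eq_zero_of_eventually_le_pow {Ω : Type*} [MeasurableSpace Ω] {P : Measure Ω}
    {s : Set Ω} {q : ℝ} (hq0 : 0 ≤ q) (hq1 : q < 1)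
    (h : ∀ᶠ n : ℕ in atTop, P s ≤ ENNReal.ofReal (q ^ n)) : P s = 0 := by
  have hlim : Tendsto (fun n : ℕ => ENNReal.ofReal (q ^ n)) atTop (𝓝 0) := by
    simpa using ENNReal.tendsto_ofReal (tendsto_pow_atTop_nhds_zero_of_lt_one hq0 hq1)
  exact nonpos_iff_eq_zero.1 (ge_of_tendsto hlim h)

theorem stmt6_general {𝒳 : Type} [Fintype 𝒳] [MeasurableSpace 𝒳]
    (μ1 ν : 𝒳 → ℝ) (hμ1 : IsPosPMF μ1) (hν : IsPosPMF ν)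
    (L : (n : ℕ) → (Fin n → 𝒳) → ℕ) (hU : StronglyUniversal L)
    (lam : ℝ) (hlam1 : lam < D μ1 ν)
    (α : ℝ)
    (P1 : Measure (ℕ → 𝒳)) (hP1 : IsIIDLaw μ1 P1) :
    P1 {x | Naux L ν lam α 0 x < ⊤} = 1 := by
  have := hP1.1
  obtain ⟨R, hR, hRbound⟩ := hU
  obtain ⟨lam', hlam', hlam'D⟩ := exists_between hlam1
  have hdrift : 0 < ∑ a, μ1 a * (llr μ1 ν a - lam') := by
    simp only [mul_sub, sum_sub_distrib, ← sum_mul, hμ1.2, one_mul]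
    exact sub_pos.2 hlam'D
  obtain ⟨t, ht, hψ⟩ := exists_chernoff_exponent μ1 _ hμ1.2 hdrift
  have hμ1_nonneg : ∀ a, 0 ≤ μ1 a := fun a => (hμ1.1 a).le
  have hnull : P1 {x | Naux L ν lam α 0 x = ⊤} = 0 := by
    refine measure_eq_zero_of_eventually_le_pow
      (sum_nonneg fun a _ => mul_nonneg (hμ1_nonneg a) (Real.exp_nonneg _)) hψ ?_
    filter_upwards [eventually_add_add_mul_le_mul hR (-Real.logb 2 α) hlam',
      eventually_ge_atTop 1] with n hn hn1
    calc P1 {x | Naux L ν lam α 0 x = ⊤}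
        ≤ ENNReal.ofReal (∑ w ∈ univ.filter (fun w : Fin n → 𝒳 => ∑ i, llr μ1 ν (w i) ≤ n * lam'),
            wp μ1 w) :=
          (measure_mono (setOf_Naux_eq_top_subset hμ1.1 hν.1 hn1 (hRbound n μ1 hμ1) hn)).trans
            (hP1.measure_seg_mem_le hμ1_nonneg _)
      _ ≤ _ := ENNReal.ofReal_le_ofReal (sum_wp_filter_le_pow _ _ hμ1_nonneg ht.le _ _)
  have hcompl : {x | Naux L ν lam α 0 x < ⊤} = {x | Naux L ν lam α 0 x = ⊤}ᶜ := by
    ext x; simp [lt_top_iff_ne_top]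
  rw [hcompl, prob_compl_eq_one_sub₀ (NullMeasurableSet.of_null hnull), hnull, tsub_zero]

/-- under the post-change source `μ1`, if `0 < λ < D(μ1‖ν)` then
the test terminates with probability one: `μ1(N(α) < ∞) = 1`. -/
theorem stmt6 {𝒳 : Type} [Fintype 𝒳] [Nonempty 𝒳] [MeasurableSpace 𝒳]
    (μ1 ν : 𝒳 → ℝ) (hμ1 : IsPosPMF μ1) (hν : IsPosPMF ν)
    (L : (n : ℕ) → (Fin n → 𝒳) → ℕ) (hL : Kraft L) (hU : StronglyUniversal L)
    (lam : ℝ) (hlam0 : 0 < lam) (hlam1 : lam < D μ1 ν)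
    (α : ℝ) (hα : α ∈ Set.Ioo (0 : ℝ) 1)
    (P1 : Measure (ℕ → 𝒳)) (hP1 : IsIIDLaw μ1 P1) :
    P1 {x | Naux L ν lam α 0 x < ⊤} = 1 :=
  stmt6_general μ1 ν hμ1 hν L hU lam hlam1 α P1 hP1

end ChangeDetect
end

section
/- Let N be an extended stopping variable with respect to X_1, X_2, … such that P_0(N < ∞) ≤ α for some α ∈ (0,1). For k = 1, 2, …, let N_k denote the stopping variable obtained by applying N to the shifted sequence X_k, X_{k+1}, …, and define N* = min{ N_k + k − 1 : k = 1, 2, … }. Then N* is an extended stopping variable satisfying E_0(N*) ≥ 1/α and Ē1(N*) ≤ E_1(N). -/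
open MeasureTheory Filter
open scoped ENNReal NNReal Topology BigOperators Classical

/-!
If `N* ≤ n`, the restart `k` attaining the minimum stops by time `n` and has `N* ≥ k` (as `N ≥ 1`,
which `P₀(N < ∞) < 1` forces). The event `N* ≥ k` is fixed by the observations before the restart,
hence independent of the restarted run, so `P₀(N* ≤ n) ≤ α ∑_{k ≤ n} P₀(N* ≥ k) ≤ α E₀(N*)`;
letting `n → ∞`, `1 ≤ α E₀(N*)` unless `E₀(N*) = ∞`. For the delay, `N* ≤ N_m + m − 1`, and
whatever the first `m − 1` observations are, `N_m` has under `P_m` the law of `N` under `P₁`.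
-/

namespace ChangeDetect

theorem IsPosPMF.isPMF_s8 {𝒳 : Type} [Fintype 𝒳] {μ : 𝒳 → ℝ} (h : IsPosPMF μ) : IsPMF μ :=
  ⟨fun a => (h.1 a).le, h.2⟩

theorem add_natCast_le_natCast_iff {a : ℕ∞} {k n : ℕ} :
    a + k ≤ n ↔ k ≤ n ∧ a ≤ (n - k : ℕ) := by
  induction a using ENat.recTopCoe with
  | top => simp
  | coe a => norm_cast; omega

theorem lintegral_enat_eq_tsum {Ω : Type*} [MeasurableSpace Ω] {μ : Measure Ω} {f : Ω → ℕ∞}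
    (hf : Measurable f) : ∫⁻ x, (f x : ℝ≥0∞) ∂μ = ∑' n : ℕ, μ {x | (n : ℕ∞) < f x} := by
  have hmeas (n : ℕ) : MeasurableSet {x | (n : ℕ∞) < f x} :=
    hf (.of_discrete (s := Set.Ioi (n : ℕ∞)))
  have hcount (x : Ω) : (f x : ℝ≥0∞) = ∑' n : ℕ, {y | (n : ℕ∞) < f y}.indicator 1 x := by
    simp only [Set.indicator_apply, Set.mem_ofPred_eq, Pi.one_apply]
    induction f x using ENat.recTopCoe with
    | top => simp
    | coe j =>
      rw [tsum_eq_sum (s := Finset.range j) fun n hn => by simpa using hn,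
        Finset.sum_ite_of_true fun n hn => by simpa using hn]
      simp
  simp_rw [hcount, ← lintegral_indicator_one (hmeas _)]
  exact lintegral_tsum fun n => (measurable_const.indicator (hmeas n)).aemeasurable

section Words

variable {𝒳 : Type}

def prefixWord (n : ℕ) (x : ℕ → 𝒳) : Fin n → 𝒳 := fun i => x i

def shift (k : ℕ) (x : ℕ → 𝒳) : ℕ → 𝒳 := fun i => x (i + k)

noncomputable def wordMass (μ : 𝒳 → ℝ) {n : ℕ} (w : Fin n → 𝒳) : ℝ≥0∞ :=
  ∏ i, ENNReal.ofReal (μ (w i))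

theorem wordMass_append (μ : 𝒳 → ℝ) {k m : ℕ} (u : Fin k → 𝒳) (v : Fin m → 𝒳) :
    wordMass μ (Fin.append u v) = wordMass μ u * wordMass μ v := by
  simp [wordMass, Fin.prod_univ_add]

theorem sum_wordMass [Fintype 𝒳] {μ : 𝒳 → ℝ} (hμ : IsPMF μ) (n : ℕ) :
    ∑ w : Fin n → 𝒳, wordMass μ w = 1 := by
  have h1 : ∑ a, ENNReal.ofReal (μ a) = 1 := by
    rw [← ENNReal.ofReal_sum_of_nonneg fun a _ => hμ.1 a, hμ.2, ENNReal.ofReal_one]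
  simp only [wordMass]
  rw [← Fintype.prod_sum fun (_ : Fin n) a => ENNReal.ofReal (μ a), h1, Finset.prod_const_one]

end Words

section Coordinates

variable {𝒳 : Type} [MeasurableSpace 𝒳]

theorem measurable_prefixWord (n : ℕ) : Measurable (prefixWord (𝒳 := 𝒳) n) :=
  measurable_pi_lambda _ fun _ => measurable_pi_apply _

theorem measurable_shift (k : ℕ) : Measurable (shift (𝒳 := 𝒳) k) :=
  measurable_pi_lambda _ fun _ => measurable_pi_apply _

theorem firstCoords_le (n : ℕ) : firstCoords 𝒳 n ≤ MeasurableSpace.pi :=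
  (measurable_prefixWord n).comap_le

theorem mem_of_measurableSet_firstCoords {n : ℕ} {A : Set (ℕ → 𝒳)}
    (hA : MeasurableSet[firstCoords 𝒳 n] A) {x y : ℕ → 𝒳} (hxy : ∀ i < n, x i = y i)
    (hx : x ∈ A) : y ∈ A := by
  obtain ⟨S, -, rfl⟩ := MeasurableSpace.measurableSet_comap.mp hA
  have : prefixWord n x = prefixWord n y := funext fun i => hxy i i.isLt
  change prefixWord n y ∈ S
  exact this ▸ hx

theorem measurableSet_firstCoords_preimage_shift {k m : ℕ} {B : Set (ℕ → 𝒳)}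
    (hB : MeasurableSet[firstCoords 𝒳 m] B) :
    MeasurableSet[firstCoords 𝒳 (k + m)] (shift k ⁻¹' B) := by
  obtain ⟨S, hS, rfl⟩ := MeasurableSpace.measurableSet_comap.mp hB
  refine MeasurableSpace.measurableSet_comap.mpr
    ⟨(fun w i => w (Fin.natAdd k i)) ⁻¹' S,
      (measurable_pi_lambda _ fun _ => measurable_pi_apply _) hS, ?_⟩
  ext x
  simp [shift, add_comm]

end Coordinates

section Restart

variable {𝒳 : Type}

/-- `shift k x` is the paper's `X_{k+1}, X_{k+2}, …`, so `minRestart N` is its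
`N* = min_k (N_k + k − 1)`. -/
noncomputable def minRestart (N : (ℕ → 𝒳) → ℕ∞) (x : ℕ → 𝒳) : ℕ∞ :=
  ⨅ k : ℕ, N (shift k x) + k

theorem minRestart_le (N : (ℕ → 𝒳) → ℕ∞) (x : ℕ → 𝒳) (k : ℕ) :
    minRestart N x ≤ N (shift k x) + k :=
  iInf_le _ k

theorem exists_add_eq_minRestart (N : (ℕ → 𝒳) → ℕ∞) (x : ℕ → 𝒳) :
    ∃ k : ℕ, N (shift k x) + k = minRestart N x :=
  ciInf_mem _

theorem minRestart_le_iff (N : (ℕ → 𝒳) → ℕ∞) (x : ℕ → 𝒳) (n : ℕ) :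
    minRestart N x ≤ n ↔ ∃ k ≤ n, N (shift k x) ≤ (n - k : ℕ) := by
  constructor
  · obtain ⟨k, hk⟩ := exists_add_eq_minRestart N x
    rw [← hk, add_natCast_le_natCast_iff]
    exact fun h => ⟨k, h⟩
  · rintro ⟨k, hkn, hk⟩
    exact (minRestart_le N x k).trans (add_natCast_le_natCast_iff.mpr ⟨hkn, hk⟩)

theorem setOf_minRestart_le_subset {N : (ℕ → 𝒳) → ℕ∞} (hpos : ∀ x, N x ≠ 0) (n : ℕ) :
    {x | minRestart N x ≤ n} ⊆ ⋃ k ∈ Finset.range (n + 1),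
      {x | (k : ℕ∞) < minRestart N x} ∩ shift k ⁻¹' {y | N y ≤ (n - k : ℕ)} := by
  intro x hx
  obtain ⟨k, hk⟩ := exists_add_eq_minRestart N x
  rw [Set.mem_ofPred_eq, ← hk, add_natCast_le_natCast_iff] at hx
  simp only [Set.mem_iUnion, Finset.mem_range]
  refine ⟨k, by omega, ?_, hx.2⟩
  rw [Set.mem_ofPred_eq, ← hk]
  exact ENat.lt_add_left (ENat.natCast_ne_top k) (pos_iff_ne_zero.mpr (hpos _))

end Restart

instance : BorelSpace ℕ∞ := ⟨borel_eq_top_of_countable.symm⟩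

section StoppingTime

variable {𝒳 : Type} [MeasurableSpace 𝒳] {N : (ℕ → 𝒳) → ℕ∞}

theorem IsSeqStoppingTime.measurable (hN : IsSeqStoppingTime N) : Measurable N :=
  measurable_of_Iic fun v => by
    induction v using ENat.recTopCoe with
    | top => simp
    | coe n => exact firstCoords_le n _ (hN n)

theorem IsSeqStoppingTime.measurableSet_lt (hN : IsSeqStoppingTime N) (n : ℕ) :
    MeasurableSet[firstCoords 𝒳 n] {x | (n : ℕ∞) < N x} := by
  simpa only [Set.compl_ofPred, not_le] using (hN n).compl

theorem IsSeqStoppingTime.eq_zero_of_eq_zero (hN : IsSeqStoppingTime N) {x : ℕ → 𝒳}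
    (hx : N x = 0) (y : ℕ → 𝒳) : N y = 0 :=
  nonpos_iff_eq_zero.mp <| by
    simpa using mem_of_measurableSet_firstCoords (hN 0) (x := x) (y := y) (by simp)
      (by simp [hx])

theorem IsSeqStoppingTime.ne_zero {P : Measure (ℕ → 𝒳)} [IsProbabilityMeasure P]
    (hN : IsSeqStoppingTime N) (hfin : P {x | N x < ⊤} < 1) (x : ℕ → 𝒳) : N x ≠ 0 := by
  intro hx
  have huniv : {x | N x < ⊤} = Set.univ :=
    Set.eq_univ_of_forall fun y => by simp [hN.eq_zero_of_eq_zero hx y]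
  rw [huniv, measure_univ] at hfin
  exact lt_irrefl _ hfin

theorem isSeqStoppingTime_minRestart (hN : IsSeqStoppingTime N) :
    IsSeqStoppingTime (minRestart N) := by
  intro n
  have hunion : {x | minRestart N x ≤ n} =
      ⋃ k ∈ Finset.range (n + 1), shift k ⁻¹' {y | N y ≤ (n - k : ℕ)} := by
    ext x
    simp [minRestart_le_iff]
  rw [hunion]
  refine MeasurableSet.biUnion (Finset.countable_toSet _) fun k hk => ?_
  have hkn : k + (n - k) = n := by simp at hk; omega
  have := measurableSet_firstCoords_preimage_shift (k := k) (hN (n - k))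
  rwa [hkn] at this

end StoppingTime

section IID

variable {𝒳 : Type} [MeasurableSpace 𝒳] {μ : 𝒳 → ℝ} {P : Measure (ℕ → 𝒳)}

theorem IsIIDLaw.measure_preimage_prefixWord_singleton (hP : IsIIDLaw μ P) {n : ℕ}
    (w : Fin n → 𝒳) : P (prefixWord n ⁻¹' {w}) = wordMass μ w := by
  have hcyl : prefixWord n ⁻¹' {w} = {x | ∀ i : Fin n, x i = w i} := by
    ext x
    simp [prefixWord, funext_iff]
  rw [hcyl, hP.2]
  rfl

variable [Fintype 𝒳]

theorem IsIIDLaw.measure_preimage_prefixWord (hP : IsIIDLaw μ P) (hμ : IsPMF μ) {n : ℕ}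
    {S : Set (Fin n → 𝒳)} (hS : MeasurableSet (prefixWord n ⁻¹' S)) :
    P (prefixWord n ⁻¹' S) = ∑ w, S.indicator (wordMass μ) w := by
  have := hP.1
  -- `𝒳` carries an arbitrary σ-algebra, so cylinders need not be measurable: both bounds use
  -- subadditivity only.
  have hle (T : Set (Fin n → 𝒳)) : P (prefixWord n ⁻¹' T) ≤ ∑ w, T.indicator (wordMass μ) w :=
    calc P (prefixWord n ⁻¹' T) = P (⋃ w ∈ T, prefixWord n ⁻¹' {w}) := by
          rw [Set.biUnion_preimage_singleton]
      _ ≤ ∑' w : T, P (prefixWord n ⁻¹' {(w : Fin n → 𝒳)}) :=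
          measure_biUnion_le P T.to_countable _
      _ = ∑ w, T.indicator (wordMass μ) w := by
          simp only [hP.measure_preimage_prefixWord_singleton]
          rw [tsum_subtype T (wordMass μ), tsum_fintype]
  have htotal : (∑ w, S.indicator (wordMass μ) w) + ∑ w, Sᶜ.indicator (wordMass μ) w =
      P (prefixWord n ⁻¹' S) + P (prefixWord n ⁻¹' Sᶜ) := by
    rw [Set.preimage_compl, measure_add_measure_compl hS, measure_univ, ← Finset.sum_add_distrib]
    simp only [Set.indicator_self_add_compl_apply, sum_wordMass hμ]
  refine le_antisymm (hle S)
    (ENNReal.le_of_add_le_add_right (measure_ne_top P (prefixWord n ⁻¹' Sᶜ)) ?_)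
  exact htotal ▸ add_le_add le_rfl (hle Sᶜ)

theorem IsIIDLaw.measure_inter_preimage_shift (hP : IsIIDLaw μ P) (hμ : IsPMF μ) {k m : ℕ}
    {A B : Set (ℕ → 𝒳)} (hA : MeasurableSet[firstCoords 𝒳 k] A)
    (hB : MeasurableSet[firstCoords 𝒳 m] B) : P (A ∩ shift k ⁻¹' B) = P A * P B := by
  obtain ⟨S, hS, rfl⟩ := MeasurableSpace.measurableSet_comap.mp hA
  obtain ⟨T, hT, rfl⟩ := MeasurableSpace.measurableSet_comap.mp hB
  set U : Set (Fin (k + m) → 𝒳) := (Fin.appendEquiv k m).symm ⁻¹' (S ×ˢ T)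
  have hU : prefixWord (k + m) ⁻¹' U =
      prefixWord k ⁻¹' S ∩ shift k ⁻¹' (prefixWord m ⁻¹' T) := by
    ext x
    simp only [U, Set.mem_preimage, Set.mem_prod, Set.mem_inter_iff, Fin.appendEquiv_symm_apply,
      prefixWord, Fin.val_castAdd, Fin.val_natAdd, add_comm k]
    exact Iff.rfl
  change P (prefixWord k ⁻¹' S ∩ shift k ⁻¹' (prefixWord m ⁻¹' T)) =
    P (prefixWord k ⁻¹' S) * P (prefixWord m ⁻¹' T)
  rw [← hU, hP.measure_preimage_prefixWord hμ
      (hU ▸ (measurable_prefixWord k hS).inter (measurable_shift k (measurable_prefixWord m hT))),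
    hP.measure_preimage_prefixWord hμ (measurable_prefixWord _ hS),
    hP.measure_preimage_prefixWord hμ (measurable_prefixWord _ hT),
    ← (Fin.appendEquiv k m).sum_comp, Fintype.sum_prod_type, Finset.sum_mul_sum]
  refine Finset.sum_congr rfl fun u _ => Finset.sum_congr rfl fun v _ => ?_
  have happend : Fin.appendEquiv k m (u, v) = Fin.append u v := rfl
  by_cases hu : u ∈ S <;> by_cases hv : v ∈ T <;> simp [U, hu, hv, happend, wordMass_append]

theorem IsIIDLaw.measure_preimage_shift (hP : IsIIDLaw μ P) (hμ : IsPMF μ) (k : ℕ) {m : ℕ}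
    {B : Set (ℕ → 𝒳)} (hB : MeasurableSet[firstCoords 𝒳 m] B) : P (shift k ⁻¹' B) = P B := by
  have := hP.1
  simpa using hP.measure_inter_preimage_shift hμ
    (MeasurableSet.univ : MeasurableSet[firstCoords 𝒳 k] _) hB

end IID

section Lorden

variable {𝒳 : Type} [Fintype 𝒳] [MeasurableSpace 𝒳] {μ : 𝒳 → ℝ} {P : Measure (ℕ → 𝒳)}
  {N : (ℕ → 𝒳) → ℕ∞}

theorem IsIIDLaw.lintegral_comp_shift (hP : IsIIDLaw μ P) (hμ : IsPMF μ)
    (hN : IsSeqStoppingTime N) (k : ℕ) : ∫⁻ x, (N (shift k x) : ℝ≥0∞) ∂P = lexp P N := by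
  rw [lexp, lintegral_enat_eq_tsum (f := fun x => N (shift k x))
      (hN.measurable.comp (measurable_shift k)),
    lintegral_enat_eq_tsum hN.measurable]
  exact tsum_congr fun n => hP.measure_preimage_shift hμ k (hN.measurableSet_lt n)

theorem IsIIDLaw.lordenE1_minRestart_le (hP : IsIIDLaw μ P) (hμ : IsPMF μ)
    (hN : IsSeqStoppingTime N) (P0 : Measure (ℕ → 𝒳)) :
    lordenE1 P0 P (minRestart N) ≤ lexp P N := by
  refine iSup_le fun m => essSup_le_of_ae_le _ (ae_of_all _ fun x => ?_)
  calc ∫⁻ y, (minRestart N (fun i => if i < m then x i else y i) : ℝ≥0∞) - m ∂P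
      ≤ ∫⁻ y, (N (shift m y) : ℝ≥0∞) ∂P := lintegral_mono fun y => ?_
    _ = lexp P N := hP.lintegral_comp_shift hμ hN m
  have hshift : shift m (fun i => if i < m then x i else y i) = shift m y :=
    funext fun i => if_neg (by omega)
  have := minRestart_le N (fun i => if i < m then x i else y i) m
  rw [hshift] at this
  rw [tsub_le_iff_right]
  simpa using ENat.toENNReal_le.mpr this

theorem IsIIDLaw.measure_minRestart_lt_top_le (hP : IsIIDLaw μ P) (hμ : IsPMF μ)
    (hN : IsSeqStoppingTime N) (hpos : ∀ x, N x ≠ 0) {a : ℝ≥0∞}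
    (herr : P {x | N x < ⊤} ≤ a) :
    P {x | minRestart N x < ⊤} ≤ a * lexp P (minRestart N) := by
  have hT := isSeqStoppingTime_minRestart hN
  have hle (n : ℕ) : P {x | minRestart N x ≤ n} ≤ a * lexp P (minRestart N) :=
    calc P {x | minRestart N x ≤ n}
        ≤ ∑ k ∈ Finset.range (n + 1),
            P ({x | (k : ℕ∞) < minRestart N x} ∩ shift k ⁻¹' {y | N y ≤ (n - k : ℕ)}) :=
          (measure_mono (setOf_minRestart_le_subset hpos n)).trans (measure_biUnion_finset_le _ _)
      _ = ∑ k ∈ Finset.range (n + 1),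
            P {x | (k : ℕ∞) < minRestart N x} * P {y | N y ≤ (n - k : ℕ)} :=
          Finset.sum_congr rfl fun k _ =>
            hP.measure_inter_preimage_shift hμ (hT.measurableSet_lt k) (hN _)
      _ ≤ ∑ k ∈ Finset.range (n + 1), P {x | (k : ℕ∞) < minRestart N x} * a := by
          gcongr with k
          exact (measure_mono fun y hy => lt_of_le_of_lt hy (ENat.natCast_lt_top _)).trans herr
      _ ≤ a * lexp P (minRestart N) := by
          rw [← Finset.sum_mul, mul_comm, lexp, lintegral_enat_eq_tsum hT.measurable]
          gcongr
          exact ENNReal.sum_le_tsum _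
  have hunion : {x | minRestart N x < ⊤} = ⋃ n : ℕ, {x | minRestart N x ≤ n} := by
    ext x
    simp only [Set.mem_ofPred_eq, Set.mem_iUnion]
    exact ⟨fun h => ⟨(minRestart N x).toNat, (ENat.natCast_toNat h.ne).ge⟩,
      fun ⟨i, hi⟩ => hi.trans_lt (ENat.natCast_lt_top i)⟩
  rw [hunion, Monotone.measure_iUnion fun i j hij =>
    Set.ofPred_subset_ofPred.mpr fun x hx => hx.trans (Nat.cast_le.mpr hij)]
  exact iSup_le hle

theorem IsIIDLaw.inv_le_lexp_minRestart (hP : IsIIDLaw μ P) (hμ : IsPMF μ)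
    (hN : IsSeqStoppingTime N) {a : ℝ≥0∞} (ha : a < 1) (herr : P {x | N x < ⊤} ≤ a) :
    a⁻¹ ≤ lexp P (minRestart N) := by
  have := hP.1
  have hpos := hN.ne_zero (herr.trans_lt ha)
  have hT := isSeqStoppingTime_minRestart hN
  by_cases htop : lexp P (minRestart N) = ⊤
  · exact htop ▸ le_top
  have hfin : P {x | minRestart N x < ⊤} = 1 := by
    have hae : ∀ᵐ x ∂P, minRestart N x < ⊤ :=
      (ae_lt_top (Measurable.of_discrete.comp hT.measurable) htop).mono fun x hx => by
        simpa using hx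
    exact (prob_compl_eq_zero_iff (hT.measurable (.of_discrete (s := Set.Iio ⊤)))).mp
      (ae_iff.mp hae)
  rw [ENNReal.inv_le_iff_le_mul (fun h => absurd h htop)
    (fun h => absurd h (ha.trans ENNReal.one_lt_top).ne)]
  exact hfin ▸ hP.measure_minRestart_lt_top_le hμ hN hpos herr

end Lorden

theorem stmt8_general {𝒳 : Type} [Fintype 𝒳] [MeasurableSpace 𝒳]
    (μ0 μ1 : 𝒳 → ℝ) (hμ0 : IsPosPMF μ0) (hμ1 : IsPosPMF μ1)
    (P0 P1 : Measure (ℕ → 𝒳)) (hP0 : IsIIDLaw μ0 P0) (hP1 : IsIIDLaw μ1 P1)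
    (N : (ℕ → 𝒳) → ℕ∞) (hN : IsSeqStoppingTime N)
    (α : ℝ) (hα : α ∈ Set.Ioo (0 : ℝ) 1)
    (herr : P0 {x | N x < ⊤} ≤ ENNReal.ofReal α) :
    IsSeqStoppingTime (fun x => ⨅ k : ℕ, N (fun i => x (i + k)) + (k : ℕ∞)) ∧
      ENNReal.ofReal (1 / α)
        ≤ lexp P0 (fun x => ⨅ k : ℕ, N (fun i => x (i + k)) + (k : ℕ∞)) ∧
      lordenE1 P0 P1 (fun x => ⨅ k : ℕ, N (fun i => x (i + k)) + (k : ℕ∞))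
        ≤ lexp P1 N := by
  refine ⟨isSeqStoppingTime_minRestart hN, ?_, hP1.lordenE1_minRestart_le hμ1.isPMF_s8 hN P0⟩
  rw [one_div, ENNReal.ofReal_inv_of_pos hα.1]
  exact hP0.inv_le_lexp_minRestart hμ0.isPMF_s8 hN (ENNReal.ofReal_lt_one.mpr hα.2) herr

/-- Lorden: if `N` is an extended stopping variable with
`P₀(N < ∞) ≤ α` and `N* = min_k (N_k + k − 1)` where `N_k` applies `N` to
`X_k, X_{k+1}, …`, then `N*` is an extended stopping variable with
`E₀(N*) ≥ 1/α` and `Ē₁(N*) ≤ E₁(N)`. -/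
theorem stmt8 {𝒳 : Type} [Fintype 𝒳] [Nonempty 𝒳] [MeasurableSpace 𝒳]
    (μ0 μ1 : 𝒳 → ℝ) (hμ0 : IsPosPMF μ0) (hμ1 : IsPosPMF μ1) (hne : μ0 ≠ μ1)
    (P0 P1 : Measure (ℕ → 𝒳)) (hP0 : IsIIDLaw μ0 P0) (hP1 : IsIIDLaw μ1 P1)
    (N : (ℕ → 𝒳) → ℕ∞) (hN : IsSeqStoppingTime N)
    (α : ℝ) (hα : α ∈ Set.Ioo (0 : ℝ) 1)
    (herr : P0 {x | N x < ⊤} ≤ ENNReal.ofReal α) :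
    IsSeqStoppingTime (fun x => ⨅ k : ℕ, N (fun i => x (i + k)) + (k : ℕ∞)) ∧
      ENNReal.ofReal (1 / α)
        ≤ lexp P0 (fun x => ⨅ k : ℕ, N (fun i => x (i + k)) + (k : ℕ∞)) ∧
      lordenE1 P0 P1 (fun x => ⨅ k : ℕ, N (fun i => x (i + k)) + (k : ℕ∞))
        ≤ lexp P1 N :=
  stmt8_general μ0 μ1 hμ0 hμ1 P0 P1 hP0 hP1 N hN α hα herr

end ChangeDetect
end
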